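/- arXiv:1909.06905 — 8 statements merged into one kernel-verified Lean document; each statement's English description precedes it below -/
import Mathlib

section
/- Let m > 0 and b₁, b₂ ∈ ℝ. If x ∈ 𝒪_ℰ^m(b₁) and y ∈ 𝒪_ℰ^m(b₂), then the product x·y lies in 𝒪_ℰ^m(b₁ + b₂). -/
open Filter Topology

noncomputable section

namespace AmiceStmt

variable {L : Type*} [NormedField L]

/-- The multiplication (coefficientwise convolution) of the Amice ring `ℰ` over `L`,
written on coefficient functions `ℤ → L`. -/
def mulE (x y : ℤ → L) : ℤ → L := fun n => ∑' k : ℤ, x k * y (n - k)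

/-- `x : ℤ → L` is the coefficient function of an element of the Amice ring `ℰ`:
the norms of the coefficients are bounded above (`v_p` bounded below), and
`‖x n‖ → 0` (`v_p(x n) → ∞`) as `n → -∞`. -/
def IsE (x : ℤ → L) : Prop :=
  (∃ C : ℝ, ∀ n : ℤ, ‖x n‖ ≤ C) ∧
    ∀ ε : ℝ, 0 < ε → ∃ N : ℤ, ∀ n : ℤ, n ≤ N → ‖x n‖ ≤ ε

/-- Membership in `𝒪_ℰ^m(b)`: an element of `ℰ` with integral coefficients
(`‖x n‖ ≤ 1`) satisfying the partial valuation condition `w_k(x) ≥ -k*m - b`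
for every `k : ℚ`, where `v_p(x n) ≤ k ↔ p^(-k) ≤ ‖x n‖`. -/
def MemOE (p : ℕ) (m b : ℝ) (x : ℤ → L) : Prop :=
  IsE x ∧ (∀ n : ℤ, ‖x n‖ ≤ 1) ∧
    ∀ (k : ℚ) (n : ℤ), (p : ℝ) ^ (-(k : ℝ)) ≤ ‖x n‖ → -(k : ℝ) * m - b ≤ (n : ℝ)

/-- The unit `1` of the Amice ring. -/
def oneE : ℤ → L := fun n => if n = 0 then 1 else 0

/-- The parameter `t` of the Amice ring. -/
def tE : ℤ → L := fun n => if n = 1 then 1 else 0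

/-- The monomial `t^k`, `k : ℤ`. -/
def tpowE (k : ℤ) : ℤ → L := fun n => if n = k then 1 else 0

/-- The constant (element of `L`) `a`, viewed in the Amice ring. -/
def constE (a : L) : ℤ → L := fun n => if n = 0 then a else 0

/-- Powers in the Amice ring. -/
def powE (x : ℤ → L) : ℕ → ℤ → L
  | 0 => oneE
  | n + 1 => mulE x (powE x n)

/-- Integer powers of a unit `x` of the Amice ring with inverse `xinv`. -/
def zpowE (x xinv : ℤ → L) (n : ℤ) : ℤ → L :=
  if 0 ≤ n then powE x n.toNat else powE xinv (-n).toNat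

/-- Membership in the bounded overconvergent ring `ℰ†`: an element of `ℰ` such that
there is `c > 0` with `v_p(x n) ≥ -c*n` (i.e. `‖x n‖ ≤ p^(c*n)`) for `n` sufficiently
negative. -/
def IsEdag (p : ℕ) (x : ℤ → L) : Prop :=
  IsE x ∧ ∃ c : ℝ, 0 < c ∧ ∃ N : ℤ, ∀ n : ℤ, n ≤ N → ‖x n‖ ≤ (p : ℝ) ^ (c * (n : ℝ))

/-- Membership in `𝒪_{ℰ†} = 𝒪_ℰ ∩ ℰ†`. -/
def IsOEdag (p : ℕ) (x : ℤ → L) : Prop := IsEdag p x ∧ ∀ n : ℤ, ‖x n‖ ≤ 1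

/-- A `p`-Frobenius endomorphism `ν` of `ℰ†` (over the normed field `K`): a ring
endomorphism of `ℰ†` preserving `𝒪_{ℰ†}`, extending a valuation-preserving field
automorphism `autL` of `K`, congruent to the `p`-th power map modulo the maximal ideal,
sending `t` to a unit of `ℰ†`, and acting on Laurent series by the coefficientwise
convergent formula `ν(∑ aₙ tⁿ) = ∑ aₙ^ν (ν t)ⁿ`. -/
structure PFrob (p : ℕ) (K : Type*) [NormedField K] where
  toFun : (ℤ → K) → ℤ → K
  autL : K ≃+* K
  autL_norm : ∀ a : K, ‖autL a‖ = ‖a‖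
  tInv : ℤ → K
  maps_Edag : ∀ x : ℤ → K, IsEdag p x → IsEdag p (toFun x)
  maps_OEdag : ∀ x : ℤ → K, IsOEdag p x → IsOEdag p (toFun x)
  map_add' : ∀ x y : ℤ → K, IsEdag p x → IsEdag p y → toFun (x + y) = toFun x + toFun y
  map_mul' : ∀ x y : ℤ → K, IsEdag p x → IsEdag p y →
    toFun (mulE x y) = mulE (toFun x) (toFun y)
  map_one' : toFun oneE = oneE
  map_const' : ∀ a : K, toFun (constE a) = constE (autL a)
  frob_mod' : ∀ x : ℤ → K, IsOEdag p x → ∀ n : ℤ, ‖(toFun x - powE x p) n‖ < 1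
  tInv_mem : IsEdag p tInv
  t_unit : mulE (toFun tE) tInv = oneE
  expansion : ∀ x : ℤ → K, IsEdag p x → ∀ j : ℤ,
    toFun x j = ∑' n : ℤ, autL (x n) * zpowE (toFun tE) tInv n j

/-- The `U_p` operator for the `p`-Frobenius `t ↦ t^p`:
`U_p(∑ aₙ tⁿ) = ∑ (a_{pn})^{ν⁻¹} tⁿ`. -/
def UpT1 (p : ℕ) (autL : L ≃+* L) (x : ℤ → L) : ℤ → L :=
  fun n => autL.symm (x ((p : ℤ) * n))

/-- The generalized binomial coefficient `C(r, n)` in `L`. -/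
def lbinom (r : L) (n : ℕ) : L := (∏ i ∈ Finset.range n, (r - (i : L))) / (n.factorial : L)

/-- The element `y ∈ ℰ` with `1 + p y = t^{-p(p-1)}((t^{p-1}+1)^p - 1)`, i.e.
`y = ∑_{i=1}^{p-1} (C(p,i)/p) t^{(p-1)(i-p)}`. -/
def yF (p : ℕ) : ℤ → L := fun j =>
  ∑ i ∈ Finset.Ico 1 p,
    if j = ((p : ℤ) - 1) * ((i : ℤ) - (p : ℤ)) then (p.choose i : L) / (p : L) else 0

/-- The element `F = t^p ∑_{n ≥ 0} C(1/(p-1), n) pⁿ yⁿ ∈ ℰ`, the `(p-1)`-st root of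
`(t^{p-1}+1)^p - 1` congruent to `t^p` mod `𝔪 𝒪_ℰ`. -/
def FE (p : ℕ) : ℤ → L := fun j =>
  ∑' n : ℕ, lbinom (((p : L) - 1)⁻¹) n * (p : L) ^ n * powE (yF p) n (j - (p : ℤ))

/-- The element `(t^{p-1}+1)^p - 1` of `ℰ`. -/
def GE (p : ℕ) : ℤ → L := fun j =>
  ∑ i ∈ Finset.Icc 1 p, if j = ((p : ℤ) - 1) * (i : ℤ) then (p.choose i : L) else 0

/-- The `p`-Frobenius endomorphism `ν` of `ℰ` with `ν(t) = F` (type 2 Frobenius,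
`t ↦ (p-1)-th root of (t^{p-1}+1)^p - 1`), given on Laurent series by
`ν(∑ aₙ tⁿ) = ∑ aₙ^ν Fⁿ`; `Finv` is the inverse of `F` in `ℰ`. -/
def nuF (p : ℕ) (autL : L ≃+* L) (Finv : ℤ → L) (x : ℤ → L) : ℤ → L :=
  fun j => ∑' n : ℤ, autL (x n) * zpowE (FE p) Finv n j

/-- Membership in `ℬ = { ∑ aₙ t^{(p-1)n} : aₙ ∈ 𝒪_L, v_p(aₙ) ≥ max(0, -n) }`. -/
def MemB (p : ℕ) (z : ℤ → L) : Prop :=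
  IsE z ∧ (∀ j : ℤ, ¬ ((p : ℤ) - 1 ∣ j) → z j = 0) ∧
    ∀ n : ℤ, ‖z (((p : ℤ) - 1) * n)‖ ≤ (p : ℝ) ^ (-(max 0 (-n)) : ℤ)

/-- Membership in `𝒜 = t⁻¹ℬ + t⁻²ℬ + ⋯ + t^{-(p-1)}ℬ`. -/
def MemA (p : ℕ) (x : ℤ → L) : Prop :=
  ∃ z : ℕ → ℤ → L, (∀ i : ℕ, MemB p (z i)) ∧
    x = fun m => ∑ i ∈ Finset.Icc 1 (p - 1), z i (m + (i : ℤ))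

/-- The exponent `a(n) = ⌊(n-1)/(p-1)⌋` for `n ≥ 1` (and `0` for `n ≤ 0`). -/
def aExp (p : ℕ) (n : ℤ) : ℤ := if 1 ≤ n then (n - 1) / ((p : ℤ) - 1) else 0

/-
In valuation terms, for `m > 0` the condition `w_k(x) ≥ -k·m - b` for all `k` says exactly that
`v_p(aₙ) ≥ -(n + b)/m`, i.e. `‖aₙ‖ ≤ p^((n + b)/m)`; this bound also forces `aₙ → 0` as
`n → -∞`. Since `(n + b₁ + b₂)/m = (j + b₁)/m + (n - j + b₂)/m`, these bounds are multiplicative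
along the convolution, and the ultrametric inequality bounds each coefficient of `x·y` by the
largest of its terms `x_j y_{n-j}`.
-/

theorem forall_rat_rpow_le_imp_iff {p m b r t : ℝ} (hp : 1 < p) (hm : 0 < m) :
    (∀ k : ℚ, p ^ (-(k : ℝ)) ≤ r → -(k : ℝ) * m - b ≤ t) ↔ r ≤ p ^ ((t + b) / m) := by
  constructor
  · intro h
    by_contra! hr
    have hr0 : 0 < r := (Real.rpow_pos_of_pos (by linarith) _).trans hr
    obtain ⟨q, hq_gt, hq_lt⟩ :=
      exists_rat_btwn ((Real.lt_logb_iff_rpow_lt hp hr0).mpr hr)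
    have hq_le : p ^ (-((-q : ℚ) : ℝ)) ≤ r := by
      rw [Rat.cast_neg, neg_neg]
      exact ((Real.lt_logb_iff_rpow_lt hp hr0).mp hq_lt).le
    have := h (-q) hq_le
    rw [div_lt_iff₀ hm] at hq_gt
    push_cast at this
    linarith
  · intro hr k hk
    have := (Real.rpow_le_rpow_left_iff hp).mp (hk.trans hr)
    rw [le_div_iff₀ hm] at this
    linarith

theorem exists_forall_le_rpow_div_le {p m b ε : ℝ} (hp : 1 < p) (hm : 0 < m) (hε : 0 < ε) :
    ∃ N : ℤ, ∀ n : ℤ, n ≤ N → p ^ ((n + b) / m) ≤ ε := by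
  refine ⟨⌊m * Real.logb p ε - b⌋, fun n hn => ?_⟩
  rw [← Real.le_logb_iff_rpow_le hp hε, div_le_iff₀' hm]
  linarith [(Int.cast_le.mpr hn).trans (Int.floor_le (m * Real.logb p ε - b))]

theorem memOE_iff {p : ℕ} (hp : 1 < p) {m b : ℝ} (hm : 0 < m) {x : ℤ → L} :
    MemOE p m b x ↔ (∀ n, ‖x n‖ ≤ 1) ∧ ∀ n : ℤ, ‖x n‖ ≤ (p : ℝ) ^ ((n + b) / m) := by
  have hp' : (1 : ℝ) < p := by exact_mod_cast hp
  simp only [MemOE, forall_comm (α := ℚ), forall_rat_rpow_le_imp_iff hp' hm]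
  refine ⟨fun h => h.2, fun ⟨h1, hw⟩ => ⟨⟨⟨1, h1⟩, fun ε hε => ?_⟩, h1, hw⟩⟩
  obtain ⟨N, hN⟩ := exists_forall_le_rpow_div_le (b := b) hp' hm hε
  exact ⟨N, fun n hn => (hw n).trans (hN n hn)⟩

theorem norm_mulE_le [IsUltrametricDist L] {x y : ℤ → L} {n : ℤ} {C : ℝ} (hC : 0 ≤ C)
    (h : ∀ j, ‖x j‖ * ‖y (n - j)‖ ≤ C) : ‖mulE x y n‖ ≤ C :=
  IsUltrametricDist.norm_tsum_le_of_forall_le_of_nonneg hC fun j =>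
    (norm_mul _ _).trans_le (h j)

theorem statement_0_general {p : ℕ} (hp : p.Prime)
    {L : Type*} [NormedField L] [IsUltrametricDist L]
    (m b₁ b₂ : ℝ) (hm : 0 < m) (x y : ℤ → L)
    (hx : MemOE p m b₁ x) (hy : MemOE p m b₂ y) :
    MemOE p m (b₁ + b₂) (mulE x y) := by
  rw [memOE_iff hp.one_lt hm] at hx hy ⊢
  obtain ⟨hx1, hxw⟩ := hx
  obtain ⟨hy1, hyw⟩ := hy
  refine ⟨fun n => norm_mulE_le zero_le_one fun j => ?_,
    fun n => norm_mulE_le (by positivity) fun j => ?_⟩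
  · exact mul_le_one₀ (hx1 j) (norm_nonneg _) (hy1 _)
  · have hp0 : (0 : ℝ) < p := by exact_mod_cast hp.pos
    calc ‖x j‖ * ‖y (n - j)‖
        ≤ (p : ℝ) ^ ((j + b₁) / m) * (p : ℝ) ^ ((((n - j : ℤ) : ℝ) + b₂) / m) :=
          mul_le_mul (hxw j) (hyw _) (norm_nonneg _) (by positivity)
      _ = (p : ℝ) ^ ((n + (b₁ + b₂)) / m) := by
          rw [← Real.rpow_add hp0]
          congr 1
          push_cast
          ring

/-- If `x ∈ 𝒪_ℰ^m(b₁)` and `y ∈ 𝒪_ℰ^m(b₂)`, then `x·y ∈ 𝒪_ℰ^m(b₁+b₂)`. -/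
theorem statement_0 {p : ℕ} (hp : p.Prime) (hp3 : 3 ≤ p)
    {L : Type*} [NormedField L] [CompleteSpace L] [IsUltrametricDist L]
    (hpL : ‖(p : L)‖ = (p : ℝ)⁻¹)
    (m b₁ b₂ : ℝ) (hm : 0 < m) (x y : ℤ → L)
    (hx : MemOE p m b₁ x) (hy : MemOE p m b₂ y) :
    MemOE p m (b₁ + b₂) (mulE x y) :=
  statement_0_general hp m b₁ b₂ hm x y hx hy

end AmiceStmt
end
end

section
/- Let s be a positive rational number and assume 𝒪_L contains an element π_s with π_s^{s(p−1)} = −p (so v_p(π_s) = 1/(s(p−1))). Then for every integer n ≥ 0 and every x ∈ 𝒪_ℰ^{s(p−1)}, one has U_p(π_s^{pn} · t^{−n} · x) ∈ π_s^{(p−1)n} · 𝒪_ℰ^{s(p−1)/p}. -/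
open Filter Topology

noncomputable section

namespace AmiceStmt

variable {L : Type*} [NormedField L]

/-!
The `j`-th coefficient of `U_p(π_s^{pn} t^{-n} x)` is `σ⁻¹(π_s^{pn} a_{pj+n})`, so after dividing
by `π_s^{(p-1)n}` the coefficient `z_j` has valuation `n/m + v_p(a_{pj+n})`, where `m = s(p-1)`
and `v_p(π_s) = 1/m`. Hence `v_p(z_j) ≤ k` forces `v_p(a_{pj+n}) ≤ k - n/m`, so
`pj + n ≥ -(k - n/m) m = -km + n`, i.e. `j ≥ -k m/p`: the index shift by `n` is exactly paid
for by the factor `π_s^n`.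
-/

theorem norm_symm_apply {σ : L ≃+* L} (hσ : ∀ a : L, ‖σ a‖ = ‖a‖) (b : L) :
    ‖σ.symm b‖ = ‖b‖ := by
  simpa using (hσ (σ.symm b)).symm

theorem eq_rpow_of_pow_num_eq_inv_pow_den {r c : ℝ} (hr : 0 ≤ r) (hc : 0 < c) {q : ℚ}
    (hq : 0 < q) (h : r ^ q.num.toNat = c⁻¹ ^ q.den) : r = c ^ (-((1 / q : ℚ) : ℝ)) := by
  have hnum : 0 < q.num := Rat.num_pos.mpr hq
  refine (pow_left_inj₀ hr (Real.rpow_nonneg hc.le _) (by omega : q.num.toNat ≠ 0)).mp ?_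
  have hexp : -((1 / q : ℚ) : ℝ) * (q.num.toNat : ℝ) = -(q.den : ℝ) := by
    have hq0 : (q : ℝ) ≠ 0 := by exact_mod_cast hq.ne'
    rw [show (q.num.toNat : ℝ) = q.num by exact_mod_cast Int.toNat_of_nonneg hnum.le,
      Rat.cast_div, Rat.cast_one]
    rw [Rat.cast_def] at hq0 ⊢
    field_simp
  rw [h, ← Real.rpow_natCast (c ^ _), ← Real.rpow_mul hc.le, hexp, Real.rpow_neg hc.le,
    Real.rpow_natCast, inv_pow]

theorem IsE.of_norm_le_comp_affine {p : ℕ} (hp : 0 < p) (n : ℤ) {x z : ℤ → L} (hx : IsE x)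
    (hz : ∀ j, ‖z j‖ ≤ ‖x (p * j + n)‖) : IsE z := by
  obtain ⟨⟨C, hC⟩, htail⟩ := hx
  refine ⟨⟨C, fun j => (hz j).trans (hC _)⟩, fun ε hε => ?_⟩
  obtain ⟨N, hN⟩ := htail ε hε
  refine ⟨min (N - n) 0, fun j hj => (hz j).trans (hN _ ?_)⟩
  have hp1 : (1 : ℤ) ≤ p := by exact_mod_cast hp
  nlinarith [min_le_left (N - n) 0, min_le_right (N - n) 0]

theorem MemOE.of_norm_eq_rpow_mul_comp_affine {p : ℕ} (hp : 1 < p) {m : ℚ} (hm : 0 < m)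
    {b : ℝ} (n : ℕ) {x z : ℤ → L} (hx : MemOE p m b x)
    (hz : ∀ j, ‖z j‖ = (p : ℝ) ^ (-((n / m : ℚ) : ℝ)) * ‖x (p * j + n)‖) :
    MemOE p (m / p) (b / p) z := by
  obtain ⟨hxE, hx1, hxw⟩ := hx
  have hp0 : (0 : ℝ) < p := by exact_mod_cast hp.trans' zero_lt_one
  have hscale : (p : ℝ) ^ (-((n / m : ℚ) : ℝ)) ≤ 1 :=
    Real.rpow_le_one_of_one_le_of_nonpos (by exact_mod_cast hp.le)
      (neg_nonpos.2 (by exact_mod_cast (div_nonneg n.cast_nonneg hm.le)))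
  have hzx : ∀ j, ‖z j‖ ≤ ‖x (p * j + n)‖ := fun j =>
    (hz j).trans_le (mul_le_of_le_one_left (norm_nonneg _) hscale)
  refine ⟨hxE.of_norm_le_comp_affine (by omega) n hzx, fun j => (hzx j).trans (hx1 _),
    fun k j hk => ?_⟩
  have hxk : (p : ℝ) ^ (-((k - n / m : ℚ) : ℝ)) ≤ ‖x (p * j + n)‖ := by
    rw [show -((k - n / m : ℚ) : ℝ) = -(k : ℝ) - -((n / m : ℚ) : ℝ) by push_cast; ring,
      Real.rpow_sub hp0, div_le_iff₀ (Real.rpow_pos_of_pos hp0 _), mul_comm, ← hz]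
    exact hk
  have hw := hxw _ _ hxk
  have hnm : (n : ℝ) / m * m = n := div_mul_cancel₀ _ (by exact_mod_cast hm.ne')
  push_cast at hw
  rw [← mul_div_assoc, ← sub_div, div_le_iff₀ hp0]
  linarith

theorem statement_4_general {p : ℕ} (hp : p.Prime)
    {L : Type*} [NormedField L]
    (hpL : ‖(p : L)‖ = (p : ℝ)⁻¹)
    (autL : L ≃+* L) (hautL : ∀ a : L, ‖autL a‖ = ‖a‖)
    (s : ℚ) (hs : 0 < s) (πs : L)
    (hπs : πs ^ (s * ((p : ℚ) - 1)).num.toNat = (-(p : L)) ^ (s * ((p : ℚ) - 1)).den)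
    (n : ℕ) (x : ℤ → L) (hx : MemOE p ((s : ℝ) * ((p : ℝ) - 1)) 0 x) :
    ∃ z : ℤ → L, MemOE p ((s : ℝ) * ((p : ℝ) - 1) / p) 0 z ∧
      UpT1 p autL (fun j => πs ^ (p * n) * x (j + (n : ℤ)))
        = fun j => πs ^ ((p - 1) * n) * z j := by
  set q : ℚ := s * ((p : ℚ) - 1) with hq
  have hq_pos : 0 < q := mul_pos hs (sub_pos.2 (by exact_mod_cast hp.one_lt))
  have hqR : (s : ℝ) * ((p : ℝ) - 1) = q := by push_cast [hq]; rfl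
  have hp0 : (0 : ℝ) < p := by exact_mod_cast hp.pos
  have hnorm_π : ‖πs‖ = (p : ℝ) ^ (-((1 / q : ℚ) : ℝ)) :=
    eq_rpow_of_pow_num_eq_inv_pow_den (norm_nonneg _) hp0 hq_pos
      (by rw [← norm_pow, hπs, norm_pow, norm_neg, hpL])
  have hπ0 : πs ≠ 0 := norm_pos_iff.mp (hnorm_π ▸ Real.rpow_pos_of_pos hp0 _)
  have hπ_pow : ‖πs‖ ^ (p * n) / ‖πs‖ ^ ((p - 1) * n) = (p : ℝ) ^ (-((n / q : ℚ) : ℝ)) := by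
    rw [show p * n = (p - 1) * n + n by
        rw [← Nat.succ_mul, Nat.succ_eq_add_one, Nat.sub_add_cancel hp.one_lt.le],
      pow_add, mul_div_cancel_left₀ _ (pow_ne_zero _ (norm_ne_zero_iff.2 hπ0)), hnorm_π,
      ← Real.rpow_natCast, ← Real.rpow_mul hp0.le]
    push_cast
    ring_nf
  refine ⟨fun j => autL.symm (πs ^ (p * n) * x (p * j + n)) / πs ^ ((p - 1) * n), ?_, ?_⟩
  · rw [hqR] at hx ⊢
    simpa only [zero_div] using hx.of_norm_eq_rpow_mul_comp_affine hp.one_lt hq_pos n fun j => by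
      rw [norm_div, norm_symm_apply hautL, norm_mul, norm_pow, norm_pow, mul_div_right_comm,
        hπ_pow]
  · funext j
    exact (mul_div_cancel₀ _ (pow_ne_zero _ hπ0)).symm

/-- For the `p`-Frobenius `t ↦ t^p`, a positive rational `s`, and
`π_s ∈ 𝒪_L` with `π_s^{s(p-1)} = -p`: for every `n ≥ 0` and `x ∈ 𝒪_ℰ^{s(p-1)}`,
`U_p(π_s^{pn} t^{-n} x) ∈ π_s^{(p-1)n} 𝒪_ℰ^{s(p-1)/p}`. -/
theorem statement_4 {p : ℕ} (hp : p.Prime) (hp3 : 3 ≤ p)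
    {L : Type*} [NormedField L] [CompleteSpace L] [IsUltrametricDist L]
    (hpL : ‖(p : L)‖ = (p : ℝ)⁻¹)
    (autL : L ≃+* L) (hautL : ∀ a : L, ‖autL a‖ = ‖a‖)
    (s : ℚ) (hs : 0 < s) (πs : L) (hπs_int : ‖πs‖ ≤ 1)
    (hπs : πs ^ (s * ((p : ℚ) - 1)).num.toNat = (-(p : L)) ^ (s * ((p : ℚ) - 1)).den)
    (n : ℕ) (x : ℤ → L) (hx : MemOE p ((s : ℝ) * ((p : ℝ) - 1)) 0 x) :
    ∃ z : ℤ → L, MemOE p ((s : ℝ) * ((p : ℝ) - 1) / p) 0 z ∧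
      UpT1 p autL (fun j => πs ^ (p * n) * x (j + (n : ℤ)))
        = fun j => πs ^ ((p - 1) * n) * z j :=
  statement_4_general hp hpL autL hautL s hs πs hπs n x hx

end AmiceStmt
end
end

section
/- One has F ∈ 𝒪_ℰ^{p(p−1)}(−p); that is, F has all coefficients in 𝒪_L, F^{p−1} = (t^{p−1}+1)^p − 1, and w_k(F) ≥ −k·p·(p−1) + p for all k ∈ ℚ. -/
open Filter Topology

noncomputable section

namespace AmiceStmt

variable {L : Type*} [NormedField L]

/-! Write `u = t^{-(p-1)}`. Then `y = Y(u)` for a polynomial `Y` without constant term, and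
`F = t^p B(u)` where `B = (1 + pY)^{1/(p-1)}` is the binomial series substituted into `pY`; hence
`F^{p-1} = t^{p(p-1)} (1 + pY(u)) = (t^{p-1}+1)^p - 1`. Since `1/(p-1)` is a `p`-adic limit of
integers, the coefficients `C(1/(p-1), n)` are integral, and every coefficient of `pY` is divisible
by `p`; so the coefficient of `u^m` in `B` has valuation at least `⌈m/(p-1)⌉`, which gives
integrality and even `w_k(F) ≥ -k(p-1)² + p`. -/

open PowerSeries

section LBinom

variable {K : Type*} [NormedField K]

lemma charZero_of_norm_natCast_lt_one {n : ℕ} (h0 : (n : K) ≠ 0) (h1 : ‖(n : K)‖ < 1) :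
    CharZero K := by
  obtain ⟨q, hq⟩ := CharP.exists K
  rcases CharP.char_is_prime_or_zero K q with hqp | rfl
  · -- `n` lies in the prime field `𝔽_q`, where `x ^ q = x`
    have : Fact q.Prime := ⟨hqp⟩
    have hfix := congrArg (ZMod.castHom (dvd_refl q) K) (ZMod.pow_card (n : ZMod q))
    rw [map_pow, map_natCast] at hfix
    have hpos : 0 < ‖(n : K)‖ := norm_pos_iff.mpr h0
    have := pow_lt_self_of_lt_one₀ hpos h1 hqp.one_lt
    rw [← norm_pow, hfix] at this
    exact absurd this (lt_irrefl _)
  · exact CharP.charP_to_charZero K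

lemma lbinom_eq_choose [CharZero K] (r : K) (n : ℕ) : lbinom r n = Ring.choose r n := by
  rw [Ring.choose_eq_smul, ← Polynomial.aeval_eq_smeval, ← Polynomial.eval_map_algebraMap,
    descPochhammer_map, descPochhammer_eval_eq_prod_range, smul_eq_mul, lbinom, inv_mul_eq_div]

lemma continuous_lbinom (n : ℕ) : Continuous fun r : K => lbinom r n := by
  unfold lbinom
  fun_prop

lemma norm_lbinom_le_one [CharZero K] [IsUltrametricDist K] {r : K}
    (hr : r ∈ closure (Set.range ((↑) : ℤ → K))) (n : ℕ) : ‖lbinom r n‖ ≤ 1 := by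
  refine closure_minimal (t := {x : K | ‖lbinom x n‖ ≤ 1}) ?_
    (isClosed_le (continuous_lbinom n).norm continuous_const) hr
  rintro _ ⟨s, rfl⟩
  rw [Set.mem_ofPred_eq, lbinom_eq_choose, ← eq_intCast (Int.castRingHom K),
    ← Ring.map_choose]
  exact IsUltrametricDist.norm_intCast_le_one K _

/-- `(n - 1)⁻¹` is the limit of the integers `(1 - nᵏ) / (n - 1) = -(1 + n + ⋯ + nᵏ⁻¹)`. -/
lemma inv_natCast_sub_one_mem_closure {n : ℕ} (hn : ‖(n : K)‖ < 1) :
    ((n : K) - 1)⁻¹ ∈ closure (Set.range ((↑) : ℤ → K)) := by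
  have hne : (n : K) - 1 ≠ 0 := by
    intro h
    rw [sub_eq_zero.mp h, norm_one] at hn
    exact lt_irrefl _ hn
  have hlim : Tendsto (fun k : ℕ => ((n : K) - 1)⁻¹ * (1 - (n : K) ^ k)) atTop
      (𝓝 (((n : K) - 1)⁻¹ * (1 - 0))) :=
    (tendsto_pow_atTop_nhds_zero_of_norm_lt_one hn).const_sub 1 |>.const_mul _
  rw [sub_zero, mul_one] at hlim
  refine mem_closure_of_tendsto hlim (Eventually.of_forall fun k => ?_)
  refine ⟨-∑ i ∈ Finset.range k, (n : ℤ) ^ i, ?_⟩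
  rw [eq_inv_mul_iff_mul_eq₀ hne]
  push_cast
  linear_combination -geom_sum_mul (n : K) k

end LBinom

section Binomial

variable {R A : Type*} [CommRing R] [BinomialRing R] [Ring A] [Algebra R A]

lemma binomialSeries_nsmul (r : R) (n : ℕ) :
    binomialSeries A (n • r) = binomialSeries A r ^ n := by
  induction n with
  | zero => simp
  | succ n ih => rw [succ_nsmul, binomialSeries_add, ih, pow_succ]

end Binomial

section Decay

variable {K : Type*} [NormedField K] {ρ : ℝ} {q : ℕ}

def CoeffDecay (ρ : ℝ) (q : ℕ) (f : K⟦X⟧) : Prop :=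
  ∀ i : ℕ, ‖coeff i f‖ ≤ ρ ^ ⌈(i : ℝ) / q⌉₊

lemma coeffDecay_one (hρ : 0 ≤ ρ) : CoeffDecay ρ q (1 : K⟦X⟧) := by
  intro i
  rw [coeff_one]
  split_ifs with hi
  · simp [hi]
  · simpa using pow_nonneg hρ _

lemma coeffDecay_monomial (hρ : 0 ≤ ρ) {m : ℕ} {c : K} (hc : ‖c‖ ≤ ρ ^ ⌈(m : ℝ) / q⌉₊) :
    CoeffDecay ρ q (monomial m c) := by
  intro i
  rw [coeff_monomial]
  split_ifs with hi
  · rwa [hi]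
  · simpa using pow_nonneg hρ _

lemma coeffDecay_sum [IsUltrametricDist K] (hρ : 0 ≤ ρ) {ι : Type*} (s : Finset ι)
    {f : ι → K⟦X⟧} (hf : ∀ i ∈ s, CoeffDecay ρ q (f i)) :
    CoeffDecay ρ q (∑ i ∈ s, f i) := fun m => by
  rw [map_sum]
  exact IsUltrametricDist.norm_sum_le_of_forall_le_of_nonneg (pow_nonneg hρ _)
    fun i hi => hf i hi m

lemma CoeffDecay.mul [IsUltrametricDist K] (hρ₀ : 0 ≤ ρ) (hρ₁ : ρ ≤ 1) {f g : K⟦X⟧}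
    (hf : CoeffDecay ρ q f) (hg : CoeffDecay ρ q g) : CoeffDecay ρ q (f * g) := fun m => by
  rw [coeff_mul]
  refine IsUltrametricDist.norm_sum_le_of_forall_le_of_nonneg (pow_nonneg hρ₀ _) fun x hx => ?_
  rw [Finset.HasAntidiagonal.mem_antidiagonal] at hx
  calc ‖coeff x.1 f * coeff x.2 g‖
      ≤ ρ ^ ⌈(x.1 : ℝ) / q⌉₊ * ρ ^ ⌈(x.2 : ℝ) / q⌉₊ := by
        rw [norm_mul]; exact mul_le_mul (hf _) (hg _) (norm_nonneg _) (pow_nonneg hρ₀ _)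
    _ ≤ ρ ^ ⌈(m : ℝ) / q⌉₊ := by
        rw [← pow_add]
        refine pow_le_pow_of_le_one hρ₀ hρ₁ ?_
        rw [← hx, Nat.cast_add, add_div]
        exact Nat.ceil_add_le _ _

lemma CoeffDecay.pow [IsUltrametricDist K] (hρ₀ : 0 ≤ ρ) (hρ₁ : ρ ≤ 1) {f : K⟦X⟧}
    (hf : CoeffDecay ρ q f) (n : ℕ) : CoeffDecay ρ q (f ^ n) := by
  induction n with
  | zero => simpa using coeffDecay_one hρ₀
  | succ n ih => simpa [pow_succ] using ih.mul hρ₀ hρ₁ hf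

lemma CoeffDecay.subst [IsUltrametricDist K] (hρ₀ : 0 ≤ ρ) (hρ₁ : ρ ≤ 1) {a f : K⟦X⟧}
    (ha : CoeffDecay ρ q a) (ha₀ : constantCoeff a = 0) (hf : ∀ d, ‖coeff d f‖ ≤ 1) :
    CoeffDecay ρ q (f.subst a) := fun m => by
  have hsub := HasSubst.of_constantCoeff_zero' ha₀
  rw [coeff_subst' hsub, finsum_eq_sum _ (coeff_subst_finite' hsub f m)]
  refine IsUltrametricDist.norm_sum_le_of_forall_le_of_nonneg (pow_nonneg hρ₀ _) fun d _ => ?_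
  rw [smul_eq_mul, norm_mul]
  simpa using mul_le_mul (hf d) (ha.pow hρ₀ hρ₁ d m) (norm_nonneg _) zero_le_one

end Decay

section Laurent

variable {K : Type*} [NormedField K]

open Classical in
/-- `f ↦ tᵃ · f(t⁻ᵠ)`, from power series in `t⁻ᵠ` to coefficient functions of `ℰ`. -/
def ofPowerSeries (q : ℕ) (a : ℤ) : K⟦X⟧ →ₗ[K] ℤ → K where
  toFun f j := if ∃ m : ℕ, j = a - q * m then coeff ((a - j) / q).toNat f else 0
  map_add' f g := by ext j; dsimp only [Pi.add_apply]; split_ifs <;> simp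
  map_smul' c f := by ext j; dsimp only [Pi.smul_apply]; split_ifs <;> simp

variable {q : ℕ}

lemma ofPowerSeries_apply (hq : 0 < q) (a : ℤ) (f : K⟦X⟧) (m : ℕ) :
    ofPowerSeries q a f (a - q * m) = coeff m f := by
  have hq' : (q : ℤ) ≠ 0 := by exact_mod_cast hq.ne'
  simp [ofPowerSeries, Int.mul_ediv_cancel_left _ hq']

lemma ofPowerSeries_apply_of_forall_ne {a j : ℤ} (f : K⟦X⟧) (h : ∀ m : ℕ, j ≠ a - q * m) :
    ofPowerSeries q a f j = 0 := by
  simp [ofPowerSeries, h]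

lemma ofPowerSeries_apply_sub_mul (hq : 0 < q) (a : ℤ) (f : K⟦X⟧) (n : ℤ) :
    ofPowerSeries q a f (a - q * n) = if 0 ≤ n then coeff n.toNat f else 0 := by
  split_ifs with hn
  · lift n to ℕ using hn
    exact ofPowerSeries_apply hq a f n
  · refine ofPowerSeries_apply_of_forall_ne f fun m hm => hn ?_
    have : (q : ℤ) * n = q * m := by linarith
    exact (mul_left_cancel₀ (by exact_mod_cast hq.ne') this) ▸ m.cast_nonneg

lemma ofPowerSeries_monomial (hq : 0 < q) (a : ℤ) (m : ℕ) (c : K) :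
    ofPowerSeries q a (monomial m c) = fun j => if j = a - q * m then c else 0 := by
  funext j
  by_cases hj : ∃ i : ℕ, j = a - q * i
  · obtain ⟨i, rfl⟩ := hj
    simp [ofPowerSeries_apply hq, coeff_monomial, hq.ne']
  · push Not at hj
    rw [ofPowerSeries_apply_of_forall_ne _ hj, if_neg (hj m)]

lemma mulE_ofPowerSeries (hq : 0 < q) (a b : ℤ) (f g : K⟦X⟧) :
    mulE (ofPowerSeries q a f) (ofPowerSeries q b g) = ofPowerSeries q (a + b) (f * g) := by
  have hinj : Function.Injective fun i : ℕ => a - q * i := fun i i' h => by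
    simpa [hq.ne'] using h
  funext j
  have hsupp : Function.support (fun k => ofPowerSeries q a f k * ofPowerSeries q b g (j - k))
      ⊆ Set.range fun i : ℕ => a - q * i := by
    intro k hk
    by_contra hk'
    rw [Set.mem_range, not_exists] at hk'
    exact hk (mul_eq_zero_of_left (ofPowerSeries_apply_of_forall_ne f fun m h => hk' m h.symm) _)
  rw [mulE, ← hinj.tsum_eq hsupp]
  simp only [ofPowerSeries_apply hq]
  by_cases hj : ∃ m : ℕ, j = a + b - q * m
  · obtain ⟨m, rfl⟩ := hj
    have hshift (i : ℕ) : a + b - q * m - (a - q * i) = b - q * ((m : ℤ) - i) := by ring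
    simp only [hshift, ofPowerSeries_apply_sub_mul hq, coeff_mul, Int.toNat_natCast,
      Finset.Nat.sum_antidiagonal_eq_sum_range_succ_mk]
    rw [tsum_eq_sum (s := Finset.range (m + 1)) fun i hi => by
      rw [if_neg (by simp at hi; omega), mul_zero]]
    refine Finset.sum_congr rfl fun i hi => ?_
    rw [Finset.mem_range] at hi
    rw [if_pos (by omega), show ((m : ℤ) - i).toNat = m - i by omega]
  · push Not at hj
    rw [ofPowerSeries_apply_of_forall_ne _ hj]
    refine (tsum_congr fun i => ?_).trans tsum_zero
    refine mul_eq_zero_of_right _ (ofPowerSeries_apply_of_forall_ne g fun l hl => ?_)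
    exact hj (i + l) (by push_cast; linarith)

lemma oneE_eq_ofPowerSeries (hq : 0 < q) : (oneE : ℤ → K) = ofPowerSeries q 0 1 := by
  rw [← map_one (C (R := K)), ← monomial_zero_eq_C_apply, ofPowerSeries_monomial hq]
  funext j
  simp [oneE]

lemma powE_ofPowerSeries (hq : 0 < q) (a : ℤ) (f : K⟦X⟧) (n : ℕ) :
    powE (ofPowerSeries q a f) n = ofPowerSeries q (n * a) (f ^ n) := by
  induction n with
  | zero => simpa [powE] using oneE_eq_ofPowerSeries hq
  | succ n ih =>
    rw [powE, ih, mulE_ofPowerSeries hq, pow_succ', Nat.cast_succ, add_one_mul, add_comm a]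

end Laurent

section MemOE

variable {K : Type*} [NormedField K] {p q : ℕ}

lemma forall_ofPowerSeries_apply {P : ℤ → K → Prop} {a : ℤ} {f : K⟦X⟧} (hq : 0 < q)
    (h₀ : ∀ j, P j 0) (hcoeff : ∀ m : ℕ, P (a - q * m) (coeff m f)) (j : ℤ) :
    P j (ofPowerSeries q a f j) := by
  by_cases hj : ∃ m : ℕ, j = a - q * m
  · obtain ⟨m, rfl⟩ := hj
    rw [ofPowerSeries_apply hq]
    exact hcoeff m
  · push Not at hj
    rw [ofPowerSeries_apply_of_forall_ne f hj]
    exact h₀ j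

lemma memOE_ofPowerSeries (hp : 1 < p) (hq : 0 < q) (a : ℤ) {f : K⟦X⟧}
    (hf : CoeffDecay (p : ℝ)⁻¹ q f) : MemOE p ((q : ℝ) * q) (-a) (ofPowerSeries q a f) := by
  have hp₀ : (0 : ℝ) < p := by positivity
  have hρ₀ : (0 : ℝ) ≤ (p : ℝ)⁻¹ := by positivity
  have hρ₁ : (p : ℝ)⁻¹ < 1 := inv_lt_one_of_one_lt₀ (by exact_mod_cast hp)
  have hq₀ : (0 : ℝ) < q := by exact_mod_cast hq
  have hle : ∀ j, ‖ofPowerSeries q a f j‖ ≤ 1 :=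
    forall_ofPowerSeries_apply (P := fun _ v => ‖v‖ ≤ 1) hq (by simp) fun m =>
      (hf m).trans (pow_le_one₀ hρ₀ hρ₁.le)
  refine ⟨⟨⟨1, hle⟩, fun ε hε => ?_⟩, hle, fun k => ?_⟩
  · obtain ⟨N, hN⟩ := exists_pow_lt_of_lt_one hε hρ₁
    refine ⟨a - q * (q * N), forall_ofPowerSeries_apply (P := fun j v => j ≤ _ → ‖v‖ ≤ ε) hq
      (by simp [hε.le]) fun m hm => ?_⟩
    have hNm : (N : ℝ) ≤ m / q := by
      rw [le_div_iff₀ hq₀]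
      have : (q : ℤ) * (q * N) ≤ q * m := by linarith
      exact_mod_cast (le_of_mul_le_mul_left this (by omega)).trans_eq' (mul_comm _ _)
    calc ‖coeff m f‖ ≤ (p : ℝ)⁻¹ ^ ⌈(m : ℝ) / q⌉₊ := hf m
      _ ≤ (p : ℝ)⁻¹ ^ N :=
        pow_le_pow_of_le_one hρ₀ hρ₁.le (by exact_mod_cast hNm.trans (Nat.le_ceil _))
      _ ≤ ε := hN.le
  · refine forall_ofPowerSeries_apply (P := fun j v => (p : ℝ) ^ (-(k : ℝ)) ≤ ‖v‖ → _ ≤ (j : ℝ))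
      hq (fun j h => ?_) fun m h => ?_
    · exact absurd h (not_le.mpr (by rw [norm_zero]; positivity))
    · have hceil : (⌈(m : ℝ) / q⌉₊ : ℝ) ≤ k := by
        have := h.trans (hf m)
        rwa [inv_pow, ← Real.rpow_natCast, ← Real.rpow_neg hp₀.le,
          Real.rpow_le_rpow_left_iff (by exact_mod_cast hp), neg_le_neg_iff] at this
      have hm : (m : ℝ) ≤ q * k := by
        rw [← div_le_iff₀' hq₀]
        exact (Nat.le_ceil _).trans hceil
      push_cast
      nlinarith

lemma MemOE.mono {m m' b b' : ℝ} {x : ℤ → K} (hp : 1 < p) (hm : m ≤ m') (hb : b ≤ b')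
    (hx : MemOE p m b x) : MemOE p m' b' x := by
  refine ⟨hx.1, hx.2.1, fun k n hk => ?_⟩
  have hk₀ : 0 ≤ (k : ℝ) := by
    have := hk.trans (hx.2.1 n)
    rwa [← Real.rpow_zero (p : ℝ), Real.rpow_le_rpow_left_iff (by exact_mod_cast hp),
      neg_nonpos] at this
  nlinarith [hx.2.2 k n hk]

end MemOE

section Frobenius

variable {K : Type*} [NormedField K] {p : ℕ}

/-- `y` as a power series in `t^{-(p-1)}`. -/
def yPowerSeries (K : Type*) [NormedField K] (p : ℕ) : K⟦X⟧ :=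
  ∑ i ∈ Finset.Ico 1 p, monomial (p - i) ((p.choose i : K) / p)

/-- `(1 + p y)^{1/(p-1)}` as a power series in `t^{-(p-1)}`, so that `F = t^p · rootSeries`. -/
def rootSeries (K : Type*) [NormedField K] [CharZero K] (p : ℕ) : K⟦X⟧ :=
  (PowerSeries.binomialSeries K ((p : K) - 1)⁻¹).subst ((p : K) • yPowerSeries K p)

lemma smul_yPowerSeries (hp : (p : K) ≠ 0) :
    (p : K) • yPowerSeries K p = ∑ i ∈ Finset.Ico 1 p, monomial (p - i) (p.choose i : K) := by
  simp only [yPowerSeries, Finset.smul_sum, ← map_smul, smul_eq_mul, mul_div_cancel₀ _ hp]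

lemma constantCoeff_smul_yPowerSeries : constantCoeff ((p : K) • yPowerSeries K p) = 0 := by
  simp only [yPowerSeries, map_smul, map_sum, ← coeff_zero_eq_constantCoeff_apply, coeff_monomial]
  rw [Finset.sum_eq_zero fun i hi => if_neg (by simp at hi; omega), smul_zero]

lemma one_add_smul_yPowerSeries (hp : (p : K) ≠ 0) (hp₁ : 1 ≤ p) :
    1 + (p : K) • yPowerSeries K p = ∑ i ∈ Finset.Icc 1 p, monomial (p - i) (p.choose i : K) := by
  rw [smul_yPowerSeries hp, ← Finset.Ico_insert_right hp₁, Finset.sum_insert (by simp)]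
  simp [monomial_zero_eq_C_apply]

lemma yF_eq_ofPowerSeries (hp : 2 ≤ p) :
    (yF p : ℤ → K) = ofPowerSeries (p - 1) 0 (yPowerSeries K p) := by
  have hq : 0 < p - 1 := by omega
  funext j
  simp only [yF, yPowerSeries, map_sum, Finset.sum_apply, ofPowerSeries_monomial hq]
  refine Finset.sum_congr rfl fun i hi => ?_
  rw [Finset.mem_Ico] at hi
  congr 2
  push_cast [Nat.cast_sub (by omega : 1 ≤ p), Nat.cast_sub hi.2.le]
  ring

lemma GE_eq_ofPowerSeries (hp : 2 ≤ p) (hp₀ : (p : K) ≠ 0) :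
    (GE p : ℤ → K) =
      ofPowerSeries (p - 1) ((p - 1 : ℕ) * p) (1 + (p : K) • yPowerSeries K p) := by
  have hq : 0 < p - 1 := by omega
  funext j
  simp only [GE, one_add_smul_yPowerSeries hp₀ (by omega), map_sum, Finset.sum_apply,
    ofPowerSeries_monomial hq]
  refine Finset.sum_congr rfl fun i hi => ?_
  rw [Finset.mem_Icc] at hi
  congr 2
  push_cast [Nat.cast_sub (by omega : 1 ≤ p), Nat.cast_sub hi.2]
  ring

variable [CharZero K]

lemma FE_eq_ofPowerSeries (hp : 2 ≤ p) :
    (FE p : ℤ → K) = ofPowerSeries (p - 1) p (rootSeries K p) := by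
  have hq : 0 < p - 1 := by omega
  have hsubst : HasSubst ((p : K) • yPowerSeries K p) :=
    HasSubst.of_constantCoeff_zero' constantCoeff_smul_yPowerSeries
  funext j
  simp only [FE, yF_eq_ofPowerSeries hp, powE_ofPowerSeries hq, mul_zero]
  by_cases hj : ∃ m : ℕ, j = p - (p - 1 : ℕ) * m
  · obtain ⟨m, rfl⟩ := hj
    have hterm : (fun n : ℕ => lbinom ((p : K) - 1)⁻¹ n * (p : K) ^ n *
        ofPowerSeries (p - 1) 0 (yPowerSeries K p ^ n) (p - (p - 1 : ℕ) * m - p)) =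
        fun n => coeff n (PowerSeries.binomialSeries K ((p : K) - 1)⁻¹) •
          coeff m (((p : K) • yPowerSeries K p) ^ n) := by
      funext n
      rw [show (p : ℤ) - (p - 1 : ℕ) * m - p = 0 - (p - 1 : ℕ) * m by ring,
        ofPowerSeries_apply hq, binomialSeries_coeff, smul_pow, map_smul, lbinom_eq_choose]
      simp only [smul_eq_mul, mul_one, mul_assoc]
    rw [hterm, tsum_eq_finsum (coeff_subst_finite' hsubst _ m), ofPowerSeries_apply hq,
      rootSeries, coeff_subst' hsubst]
  · push Not at hj
    rw [ofPowerSeries_apply_of_forall_ne _ hj]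
    refine (tsum_congr fun n => ?_).trans tsum_zero
    refine mul_eq_zero_of_right _ (ofPowerSeries_apply_of_forall_ne _ fun m hm => hj m ?_)
    linarith

lemma rootSeries_pow (hp : 2 ≤ p) : rootSeries K p ^ (p - 1) = 1 + (p : K) • yPowerSeries K p := by
  have hsubst : HasSubst ((p : K) • yPowerSeries K p) :=
    HasSubst.of_constantCoeff_zero' constantCoeff_smul_yPowerSeries
  have hr : (p - 1) • ((p : K) - 1)⁻¹ = ((1 : ℕ) : K) := by
    rw [nsmul_eq_mul, Nat.cast_sub (by omega), Nat.cast_one, mul_inv_cancel₀]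
    exact sub_ne_zero.mpr (by exact_mod_cast (by omega : p ≠ 1))
  rw [rootSeries, ← subst_pow hsubst, ← binomialSeries_nsmul, hr, binomialSeries_nat, pow_one,
    ← coe_substAlgHom hsubst, map_add, map_one, substAlgHom_X]

end Frobenius

section Integrality

variable {K : Type*} [NormedField K] [IsUltrametricDist K] {p : ℕ}

lemma norm_natCast_choose_le (hp : p.Prime) {i : ℕ} (hi₀ : 0 < i) (hi : i < p) :
    ‖(p.choose i : K)‖ ≤ ‖(p : K)‖ := by
  obtain ⟨c, hc⟩ := hp.dvd_choose_self hi₀.ne' hi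
  rw [hc, Nat.cast_mul, norm_mul]
  exact mul_le_of_le_one_right (norm_nonneg _) (IsUltrametricDist.norm_natCast_le_one K c)

lemma coeffDecay_smul_yPowerSeries (hp : p.Prime) (hpK : ‖(p : K)‖ = (p : ℝ)⁻¹) :
    CoeffDecay (p : ℝ)⁻¹ (p - 1) ((p : K) • yPowerSeries K p) := by
  have hp₀ : (p : K) ≠ 0 := norm_ne_zero_iff.mp (by rw [hpK]; simp [hp.ne_zero])
  rw [smul_yPowerSeries hp₀]
  refine coeffDecay_sum (by positivity) _ fun i hi => coeffDecay_monomial (by positivity) ?_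
  rw [Finset.mem_Ico] at hi
  have hceil : ⌈((p - i : ℕ) : ℝ) / (p - 1 : ℕ)⌉₊ ≤ 1 := by
    rw [Nat.ceil_le, Nat.cast_one, div_le_one (by exact_mod_cast (by omega : 0 < p - 1))]
    exact_mod_cast (by omega : p - i ≤ p - 1)
  calc ‖(p.choose i : K)‖ ≤ (p : ℝ)⁻¹ ^ 1 := by
        rw [pow_one, ← hpK]; exact norm_natCast_choose_le hp (by omega) hi.2
    _ ≤ (p : ℝ)⁻¹ ^ ⌈((p - i : ℕ) : ℝ) / (p - 1 : ℕ)⌉₊ :=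
        pow_le_pow_of_le_one (by positivity) (inv_le_one_of_one_le₀ (mod_cast hp.one_le)) hceil

lemma coeffDecay_rootSeries [CharZero K] (hp : p.Prime) (hpK : ‖(p : K)‖ = (p : ℝ)⁻¹) :
    CoeffDecay (p : ℝ)⁻¹ (p - 1) (rootSeries K p) := by
  have hpK₁ : ‖(p : K)‖ < 1 := by
    rw [hpK]; exact inv_lt_one_of_one_lt₀ (by exact_mod_cast hp.one_lt)
  refine (coeffDecay_smul_yPowerSeries hp hpK).subst (by positivity)
    (inv_le_one_of_one_le₀ (by exact_mod_cast hp.one_le)) constantCoeff_smul_yPowerSeries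
    fun d => ?_
  rw [binomialSeries_coeff, smul_eq_mul, mul_one, ← lbinom_eq_choose]
  exact norm_lbinom_le_one (inv_natCast_sub_one_mem_closure hpK₁) d

end Integrality

theorem statement_5_general {p : ℕ} (hp : p.Prime)
    (L : Type*) [NormedField L] [IsUltrametricDist L]
    (hpL : ‖(p : L)‖ = (p : ℝ)⁻¹) :
    MemOE p ((p : ℝ) * ((p : ℝ) - 1)) (-(p : ℝ)) (FE p : ℤ → L) ∧
    powE (FE p : ℤ → L) (p - 1) = GE p := by
  have hp₀ : (p : L) ≠ 0 := norm_ne_zero_iff.mp (by rw [hpL]; simp [hp.ne_zero])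
  have : CharZero L := charZero_of_norm_natCast_lt_one hp₀
    (by rw [hpL]; exact inv_lt_one_of_one_lt₀ (by exact_mod_cast hp.one_lt))
  have hq : 0 < p - 1 := Nat.sub_pos_of_lt hp.one_lt
  rw [FE_eq_ofPowerSeries hp.two_le]
  refine ⟨(memOE_ofPowerSeries hp.one_lt hq _ (coeffDecay_rootSeries hp hpL)).mono hp.one_lt
    ?_ (by simp), ?_⟩
  · rw [Nat.cast_sub hp.one_le, Nat.cast_one]
    nlinarith [(by exact_mod_cast hp.one_le : (1 : ℝ) ≤ p)]
  · rw [powE_ofPowerSeries hq, rootSeries_pow hp.two_le, GE_eq_ofPowerSeries hp.two_le hp₀]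

/-- `F ∈ 𝒪_ℰ^{p(p-1)}(-p)`: all coefficients of `F` lie in `𝒪_L`,
`F^{p-1} = (t^{p-1}+1)^p - 1`, and `w_k(F) ≥ -k·p(p-1) + p` for all `k ∈ ℚ`. -/
theorem statement_5 {p : ℕ} (hp : p.Prime) (hp3 : 3 ≤ p)
    (L : Type*) [NormedField L] [CompleteSpace L] [IsUltrametricDist L]
    (hpL : ‖(p : L)‖ = (p : ℝ)⁻¹) :
    MemOE p ((p : ℝ) * ((p : ℝ) - 1)) (-(p : ℝ)) (FE p : ℤ → L) ∧
    powE (FE p : ℤ → L) (p - 1) = GE p :=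
  statement_5_general hp L hpL

end AmiceStmt
end
end

section
/- Write the minimal polynomial of t^{−1} over the subfield ν(ℰ) as Q(X) = X^p + ν(a_1)X^{p−1} + ⋯ + ν(a_p) with a_1, …, a_p ∈ ℰ (this is possible since ν is injective and ℰ has degree p over ν(ℰ)). Then a_p ∈ t^{−1}·ℬ, and for each 1 ≤ i ≤ p−1 one has a_i ∈ p·t^{−i}·ℬ. -/
/-!
Every integral power `F^n = ν(t^n)` has the shape `t^(pn) (1 + ∑_{s ≥ 1} b_s t^(-(p-1)s))` with
`v_p(b_s) ≥ ⌈s/(p-1)⌉`, and such coefficient bounds are multiplicative. For `F` this follows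
from `F = t^p ∑ C(1/(p-1), k) (p y)^k`: the coefficients of `p y` obey the bound because
`p ∣ C(p, i)`, and `C(1/(p-1), k)` is integral because `1/(p-1)` is a `p`-adic limit of integers.
For `F⁻¹` it follows from `F F⁻¹ = 1`, a triangular system for the coefficients of `F⁻¹` whose
off-diagonal part is contracting.

Reading off the coefficient of `t^(m-p)` in `Q(t⁻¹) = 0`, with `m = pn + i` and `1 ≤ i ≤ p`,
expresses `a_i(n)^ν` as `-[m = 0]` minus the unknowns at indices `m + (p-1)s`, `s ≥ 1`, weighted
by elements of valuation `≥ ⌈s/(p-1)⌉`. By the same contraction argument the solution of such a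
system is bounded by every supersolution, and the bound claimed by the theorem is one, because
`⌊(q+s)/p⌋ - ⌊q/p⌋ ≤ ⌈s/(p-1)⌉` for `s ≥ 1`.
-/

open Filter Topology

noncomputable section

namespace AmiceStmt

variable {L : Type*} [NormedField L]

open Finset

lemma one_le_ceilDiv {s d : ℕ} (hd : 0 < d) (hs : 0 < s) : 1 ≤ s ⌈/⌉ d := by
  by_contra! h0
  rw [Nat.lt_one_iff, ← Nat.le_zero, ceilDiv_le_iff_le_mul hd] at h0
  omega

lemma add_ceilDiv_le {a b D : ℕ} (hD : 0 < D) : (a + b) ⌈/⌉ D ≤ a ⌈/⌉ D + b ⌈/⌉ D := by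
  rw [ceilDiv_le_iff_le_mul hD, mul_add]
  exact add_le_add (le_smul_ceilDiv hD) (le_smul_ceilDiv hD)

section DecayBound

variable {d : ℕ} {r : ℝ}

/-- For `d = p - 1` and `r = p⁻¹`, `decayBound d r (d * s) = r ^ ⌈s / d⌉`: the bound on the
coefficient of `t^(c - (p-1)s)` of `t^c (1 + ∑_{s ≥ 1} b_s t^(-(p-1)s))` with
`v_p(b_s) ≥ ⌈s/(p-1)⌉`, which is the shape of `F` and of all its integral powers. -/
def decayBound (d : ℕ) (r : ℝ) (n : ℤ) : ℝ :=
  if 0 ≤ n ∧ (d : ℤ) ∣ n then r ^ (n.toNat ⌈/⌉ (d * d)) else 0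

lemma decayBound_nonneg (hr0 : 0 ≤ r) (n : ℤ) : 0 ≤ decayBound d r n := by
  unfold decayBound
  split_ifs <;> positivity

@[simp]
lemma decayBound_zero : decayBound d r 0 = 1 := by
  simp [decayBound]

lemma decayBound_of_neg {n : ℤ} (hn : n < 0) : decayBound d r n = 0 := by
  simp [decayBound, not_le.2 hn]

lemma decayBound_le_of_ne_zero (hd : 0 < d) (hr0 : 0 ≤ r) (hr1 : r ≤ 1) {n : ℤ} (hn : n ≠ 0) :
    decayBound d r n ≤ r := by
  unfold decayBound
  split_ifs with h
  · exact pow_le_of_le_one hr0 hr1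
      (Nat.one_le_iff_ne_zero.1 (one_le_ceilDiv (by positivity) (by omega)))
  · exact hr0

lemma decayBound_natCast_mul (hd : 0 < d) (s : ℕ) : decayBound d r (d * s) = r ^ (s ⌈/⌉ d) := by
  have h : (d * s) ⌈/⌉ (d * d) = s ⌈/⌉ d := eq_of_forall_ge_iff fun y => by
    rw [ceilDiv_le_iff_le_mul (by positivity), ceilDiv_le_iff_le_mul hd, mul_assoc,
      Nat.mul_le_mul_left_iff hd]
  rw [decayBound, if_pos ⟨by positivity, dvd_mul_right _ _⟩, ← Nat.cast_mul, Int.toNat_natCast, h]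

lemma decayBound_natCast_mul_of_le (hd : 0 < d) {s : ℕ} (hs0 : 0 < s) (hsd : s ≤ d) :
    decayBound d r (d * s) = r := by
  rw [decayBound_natCast_mul hd, le_antisymm ((ceilDiv_le_iff_le_mul hd).2 (by simpa using hsd))
    (one_le_ceilDiv hd hs0), pow_one]

lemma decayBound_mul_le (hd : 0 < d) (hr0 : 0 ≤ r) (hr1 : r ≤ 1) (a b : ℤ) :
    decayBound d r a * decayBound d r b ≤ decayBound d r (a + b) := by
  unfold decayBound
  split_ifs with ha hb hab hab
  · rw [← pow_add]
    refine pow_le_pow_of_le_one hr0 hr1 ?_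
    rw [show (a + b).toNat = a.toNat + b.toNat by omega]
    exact add_ceilDiv_le (by positivity)
  · exact absurd ⟨by omega, dvd_add ha.2 hb.2⟩ hab
  all_goals simp [pow_nonneg hr0]

lemma tendsto_decayBound_cofinite (hd : 0 < d) (hr0 : 0 ≤ r) (hr1 : r < 1) :
    Tendsto (decayBound d r) cofinite (𝓝 0) := by
  rw [Int.cofinite_eq, tendsto_sup]
  constructor
  · refine tendsto_const_nhds.congr' ?_
    filter_upwards [eventually_lt_atBot 0] with n hn
    exact (decayBound_of_neg hn).symm
  · have hexp : Tendsto (fun n : ℤ => n.toNat / (d * d)) atTop atTop :=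
      (Nat.tendsto_div_const_atTop (by positivity)).comp
        (tendsto_atTop_atTop.2 fun b => ⟨b, fun n hn => by omega⟩)
    refine squeeze_zero (decayBound_nonneg hr0) (fun n => ?_)
      ((tendsto_pow_atTop_nhds_zero_of_lt_one hr0 hr1).comp hexp)
    unfold decayBound
    split_ifs
    · exact pow_le_pow_of_le_one hr0 hr1.le (floorDiv_le_ceilDiv (α := ℕ))
    · exact pow_nonneg hr0 _

end DecayBound

lemma le_of_forall_le_max_imp_le_max_mul {ι : Type*} {u T : ι → ℝ} {C r : ℝ} (hr0 : 0 ≤ r)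
    (hr1 : r < 1) (hT : ∀ i, 0 ≤ T i) (hu : ∀ i, u i ≤ C)
    (hstep : ∀ ε, 0 ≤ ε → (∀ i, u i ≤ max (T i) ε) → ∀ i, u i ≤ max (T i) (r * ε)) (i : ι) :
    u i ≤ T i := by
  have hk : ∀ k : ℕ, ∀ i, u i ≤ max (T i) (max C 0 * r ^ k) := by
    intro k
    induction k with
    | zero => exact fun i => by simpa using Or.inr ((hu i).trans (le_max_left C 0))
    | succ k ih =>
      intro i
      have := hstep _ (by positivity) ih i
      rwa [← mul_assoc, mul_comm r, mul_assoc, ← pow_succ'] at this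
  have hlim : Tendsto (fun k : ℕ => max (T i) (max C 0 * r ^ k)) atTop (𝓝 (max (T i) 0)) :=
    tendsto_const_nhds.max
      (by simpa using (tendsto_pow_atTop_nhds_zero_of_lt_one hr0 hr1).const_mul (max C 0))
  simpa [max_eq_left (hT i)] using ge_of_tendsto hlim (Eventually.of_forall fun k => hk k i)

lemma norm_mul_le_max_of_decayBound {d : ℕ} {r : ℝ} (hd : 0 < d) (hr0 : 0 ≤ r) (hr1 : r ≤ 1)
    {T : ℤ → ℝ} (hT : ∀ m n, n ≠ 0 → decayBound d r n * T (m + n) ≤ T m) {m n : ℤ} (hn : n ≠ 0)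
    {ε : ℝ} (hε : 0 ≤ ε) {x w : L} (hx : ‖x‖ ≤ max (T (m + n)) ε)
    (hw : ‖w‖ ≤ decayBound d r n) : ‖x * w‖ ≤ max (T m) (r * ε) :=
  calc ‖x * w‖ = ‖w‖ * ‖x‖ := by rw [norm_mul, mul_comm]
    _ ≤ decayBound d r n * max (T (m + n)) ε :=
      mul_le_mul hw hx (norm_nonneg _) (decayBound_nonneg hr0 n)
    _ = max (decayBound d r n * T (m + n)) (decayBound d r n * ε) :=
      mul_max_of_nonneg _ _ (decayBound_nonneg hr0 n)
    _ ≤ max (T m) (r * ε) :=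
      max_le_max (hT m n hn)
        (mul_le_mul_of_nonneg_right (decayBound_le_of_ne_zero hd hr0 hr1 hn) hε)

section Ultrametric

variable [IsUltrametricDist L]

lemma summable_of_norm_le_mul_decayBound [CompleteSpace L] {d : ℕ} {r : ℝ} (hd : 0 < d)
    (hr0 : 0 ≤ r) (hr1 : r < 1) {ι : Type*} {f : ι → L} {e : ι → ℤ}
    (he : Function.Injective e) {C : ℝ} (hf : ∀ i, ‖f i‖ ≤ C * decayBound d r (e i)) :
    Summable f := by
  refine NonarchimedeanAddGroup.summable_of_tendsto_cofinite_zero (squeeze_zero_norm hf ?_)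
  simpa using ((tendsto_decayBound_cofinite hd hr0 hr1).comp he.tendsto_cofinite).const_mul C

lemma norm_apply_le_of_tsum_eq {ι : Type*} {f : ι → L} (hf : Summable f) {e : L}
    (h : ∑' i, f i = e) {B : ℝ} (he : ‖e‖ ≤ B) (i₀ : ι) (hB : ∀ i ≠ i₀, ‖f i‖ ≤ B) :
    ‖f i₀‖ ≤ B := by
  classical
  have hB0 : 0 ≤ B := (norm_nonneg e).trans he
  have hsplit := hf.tsum_eq_add_tsum_ite i₀
  rw [h] at hsplit
  rw [eq_sub_of_add_eq hsplit.symm, sub_eq_add_neg]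
  refine (IsUltrametricDist.norm_add_le_max _ _).trans (max_le he ?_)
  rw [norm_neg]
  refine IsUltrametricDist.norm_tsum_le_of_forall_le_of_nonneg hB0 fun i => ?_
  split_ifs with hi
  · simpa using hB0
  · exact hB i hi

lemma norm_apply_le_of_add_sum_tsum_eq_zero {ι κ : Type*} [DecidableEq ι]
    {s : Finset ι} {f : ι → κ → L} {e : L} (h : e + ∑ i ∈ s, ∑' k, f i k = 0) {B : ℝ}
    (he : ‖e‖ ≤ B) {i₀ : ι} (hi₀ : i₀ ∈ s) (hf : Summable (f i₀)) (k₀ : κ)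
    (hB : ∀ i ∈ s, ∀ k, (i, k) ≠ (i₀, k₀) → ‖f i k‖ ≤ B) : ‖f i₀ k₀‖ ≤ B := by
  have hB0 : 0 ≤ B := (norm_nonneg e).trans he
  rw [← add_sum_erase _ _ hi₀] at h
  refine norm_apply_le_of_tsum_eq hf (e := -(e + ∑ i ∈ s.erase i₀, ∑' k, f i k))
    (by linear_combination h) ?_ k₀ fun k hk => hB i₀ hi₀ k (by simpa using hk)
  rw [norm_neg]
  refine (IsUltrametricDist.norm_add_le_max _ _).trans (max_le he ?_)
  refine IsUltrametricDist.norm_sum_le_of_forall_le_of_nonneg hB0 fun i hi => ?_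
  exact IsUltrametricDist.norm_tsum_le_of_forall_le_of_nonneg hB0 fun k =>
    hB i (mem_of_mem_erase hi) k (by simp [ne_of_mem_erase hi])

end Ultrametric

def IsDecayBounded (d : ℕ) (r : ℝ) (c : ℤ) (x : ℤ → L) : Prop :=
  ∀ j, ‖x j‖ ≤ decayBound d r (c - j)

section DecayBounded

variable {d : ℕ} {r : ℝ} {c c' : ℤ} {x y : ℤ → L}

lemma IsDecayBounded.apply_eq_zero_of_lt (hx : IsDecayBounded d r c x) {j : ℤ} (hj : c < j) :
    x j = 0 :=
  norm_le_zero_iff.1 ((hx j).trans_eq (decayBound_of_neg (by omega)))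

lemma isDecayBounded_oneE (hr0 : 0 ≤ r) : IsDecayBounded d r 0 (oneE : ℤ → L) := by
  intro j
  by_cases hj : j = 0
  · simp [oneE, hj]
  · simp [oneE, hj, decayBound_nonneg hr0]

lemma IsDecayBounded.mul_apply_add (hx : IsDecayBounded d r c x) (hy : IsDecayBounded d r c' y) :
    mulE x y (c + c') = x c * y c' := by
  refine (tsum_eq_single c fun k hk => ?_).trans (by rw [add_sub_cancel_left])
  rcases lt_or_gt_of_ne hk with hlt | hgt
  · rw [hy.apply_eq_zero_of_lt (by omega), mul_zero]
  · rw [hx.apply_eq_zero_of_lt hgt, zero_mul]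

variable [IsUltrametricDist L]

lemma IsDecayBounded.mul (hd : 0 < d) (hr0 : 0 ≤ r) (hr1 : r ≤ 1) (hx : IsDecayBounded d r c x)
    (hy : IsDecayBounded d r c' y) : IsDecayBounded d r (c + c') (mulE x y) := by
  intro j
  refine IsUltrametricDist.norm_tsum_le_of_forall_le_of_nonneg (decayBound_nonneg hr0 _)
    fun k => ?_
  calc ‖x k * y (j - k)‖ = ‖x k‖ * ‖y (j - k)‖ := norm_mul _ _
    _ ≤ decayBound d r (c - k) * decayBound d r (c' - (j - k)) :=
      mul_le_mul (hx k) (hy _) (norm_nonneg _) (decayBound_nonneg hr0 _)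
    _ ≤ decayBound d r (c + c' - j) := by
      convert decayBound_mul_le hd hr0 hr1 (c - k) (c' - (j - k)) using 2
      ring

lemma IsDecayBounded.pow (hd : 0 < d) (hr0 : 0 ≤ r) (hr1 : r ≤ 1) (hx : IsDecayBounded d r c x)
    (n : ℕ) : IsDecayBounded d r (c * n) (powE x n) := by
  induction n with
  | zero => simpa [powE] using isDecayBounded_oneE hr0
  | succ n ih =>
    have := hx.mul hd hr0 hr1 ih
    rwa [show c + c * n = c * (n + 1 : ℕ) by push_cast; ring] at this

lemma IsDecayBounded.pow_apply_mul (hd : 0 < d) (hr0 : 0 ≤ r) (hr1 : r ≤ 1)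
    (hx : IsDecayBounded d r c x) (n : ℕ) : powE x n (c * n) = x c ^ n := by
  induction n with
  | zero => simp [powE, oneE]
  | succ n ih =>
    rw [show c * (n + 1 : ℕ) = c + c * n by push_cast; ring, powE,
      hx.mul_apply_add (hx.pow hd hr0 hr1 n), ih, pow_succ']

lemma IsDecayBounded.summable_mul [CompleteSpace L] (hd : 0 < d) (hr0 : 0 ≤ r) (hr1 : r < 1)
    (hx : IsDecayBounded d r c x) {g : ℤ → L} {C : ℝ} (hg : ∀ j, ‖g j‖ ≤ C) (m : ℤ) :
    Summable fun k => x k * g (m - k) :=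
  summable_of_norm_le_mul_decayBound hd hr0 hr1 (sub_right_injective (b := c)) fun k => by
    rw [norm_mul, mul_comm]
    exact mul_le_mul (hg _) (hx k) (norm_nonneg _) ((norm_nonneg _).trans (hg 0))

lemma IsDecayBounded.of_mulE_eq_oneE [CompleteSpace L] (hd : 0 < d) (hr0 : 0 ≤ r) (hr1 : r < 1)
    (hx : IsDecayBounded d r c x) (hxc : x c = 1) {C : ℝ} (hy : ∀ j, ‖y j‖ ≤ C)
    (hxy : mulE x y = oneE) : IsDecayBounded d r (-c) y := by
  have hT : ∀ m n, n ≠ 0 →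
      decayBound d r n * decayBound d r (-c - (m + n)) ≤ decayBound d r (-c - m) := by
    intro m n _
    convert decayBound_mul_le hd hr0 hr1.le n (-c - (m + n)) using 2
    ring
  refine le_of_forall_le_max_imp_le_max_mul hr0 hr1 (fun j => decayBound_nonneg hr0 _) hy ?_
  intro ε hε hbound j
  have heq : ∑' k, x k * y (j + c - k) = oneE (j + c) := congrFun hxy (j + c)
  rw [show y j = x c * y (j + c - c) by rw [hxc, one_mul, add_sub_cancel_right]]
  refine norm_apply_le_of_tsum_eq (hx.summable_mul hd hr0 hr1 hy (j + c)) heq ?_ c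
    fun k hk => ?_
  · refine le_max_of_le_left ?_
    by_cases h : j + c = 0
    · simp [oneE, h, show -c - j = 0 by omega]
    · simp [oneE, h, decayBound_nonneg hr0]
  · rw [mul_comm]
    refine norm_mul_le_max_of_decayBound hd hr0 hr1.le (T := fun m => decayBound d r (-c - m)) hT
      (sub_ne_zero.2 hk.symm) hε ?_ (hx k)
    simpa [add_sub_assoc] using hbound (j + c - k)

end DecayBounded

section Frobenius

variable {p : ℕ}

lemma inv_natCast_lt_one (hp : 1 < p) : (p : ℝ)⁻¹ < 1 :=
  inv_lt_one_of_one_lt₀ (Nat.one_lt_cast.2 hp)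

lemma yF_apply_zero (hp : 1 < p) : (yF p : ℤ → L) 0 = 0 :=
  sum_eq_zero fun i hi => if_neg fun h => by
    rw [mem_Ico] at hi
    exact mul_ne_zero (by omega) (by omega) h.symm

lemma powE_const_mul (a : L) (x : ℤ → L) (n : ℕ) :
    powE (fun j => a * x j) n = fun j => a ^ n * powE x n j := by
  induction n with
  | zero => funext j; simp [powE]
  | succ n ih =>
    funext j
    simp only [powE, ih, mulE, pow_succ', ← tsum_mul_left]
    congr 1
    funext k
    ring

lemma FE_apply (j : ℤ) : (FE p : ℤ → L) j
    = ∑' n : ℕ, lbinom ((p : L) - 1)⁻¹ n * powE (fun j => (p : L) * yF p j) n (j - p) := by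
  simp only [FE, powE_const_mul, mul_assoc]

variable [IsUltrametricDist L]

lemma norm_prod_sub_prod_le {ι : Type*} (s : Finset ι) {u v : ι → L} {δ : ℝ} (hδ : 0 ≤ δ)
    (hu : ∀ i, ‖u i‖ ≤ 1) (hv : ∀ i, ‖v i‖ ≤ 1) (huv : ∀ i, ‖u i - v i‖ ≤ δ) :
    ‖∏ i ∈ s, u i - ∏ i ∈ s, v i‖ ≤ δ := by
  induction s using Finset.cons_induction with
  | empty => simpa using hδ
  | cons a s ha ih =>
    have hprod : ‖∏ i ∈ s, u i‖ ≤ 1 :=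
      (norm_prod _ _).trans_le (prod_le_one (fun _ _ => norm_nonneg _) fun i _ => hu i)
    rw [prod_cons, prod_cons, show u a * ∏ i ∈ s, u i - v a * ∏ i ∈ s, v i
      = (u a - v a) * ∏ i ∈ s, u i + v a * (∏ i ∈ s, u i - ∏ i ∈ s, v i) by ring]
    refine (IsUltrametricDist.norm_add_le_max _ _).trans (max_le ?_ ?_) <;> rw [norm_mul]
    · exact (mul_le_mul (huv a) hprod (norm_nonneg _) hδ).trans_eq (mul_one δ)
    · exact (mul_le_mul (hv a) ih (norm_nonneg _) zero_le_one).trans_eq (one_mul δ)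

lemma norm_lbinom_intCast_le_one (N : ℤ) (n : ℕ) : ‖lbinom (N : L) n‖ ≤ 1 := by
  by_cases hn : (n.factorial : L) = 0
  · simp [lbinom, hn]
  have h : ∏ i ∈ range n, ((N : L) - i) = n.factorial * (Ring.choose N n : ℤ) := by
    have := Ring.descPochhammer_eq_factorial_smul_choose N n
    rw [← Polynomial.eval_eq_smeval, descPochhammer_eval_eq_prod_range, nsmul_eq_mul] at this
    simpa using congrArg (Int.cast : ℤ → L) this
  rw [lbinom, h, mul_div_cancel_left₀ _ hn]
  exact IsUltrametricDist.norm_intCast_le_one L _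

lemma norm_lbinom_le_one_s6 {x : L} (hx : ‖x‖ ≤ 1) (happrox : ∀ ε > 0, ∃ N : ℤ, ‖x - N‖ < ε)
    (n : ℕ) : ‖lbinom x n‖ ≤ 1 := by
  by_cases hn : (n.factorial : L) = 0
  · simp [lbinom, hn]
  have hsub : ∀ y : L, ‖y‖ ≤ 1 → ∀ i : ℕ, ‖y - i‖ ≤ 1 := fun y hy i => by
    rw [sub_eq_add_neg]
    refine (IsUltrametricDist.norm_add_le_max _ _).trans (max_le hy ?_)
    rw [norm_neg]
    exact IsUltrametricDist.norm_natCast_le_one L i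
  obtain ⟨N, hN⟩ := happrox _ (norm_pos_iff.2 hn)
  have hdiff : ‖lbinom x n - lbinom (N : L) n‖ ≤ 1 := by
    rw [lbinom, lbinom, ← sub_div, norm_div, div_le_one (norm_pos_iff.2 hn)]
    refine (norm_prod_sub_prod_le _ (norm_nonneg (x - N)) (fun i => hsub x hx i)
      (fun i => hsub N (IsUltrametricDist.norm_intCast_le_one L N) i)
      (fun i => by rw [sub_sub_sub_cancel_right])).trans hN.le
  calc ‖lbinom x n‖ = ‖lbinom (N : L) n + (lbinom x n - lbinom (N : L) n)‖ := by
        rw [add_sub_cancel]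
    _ ≤ 1 := (IsUltrametricDist.norm_add_le_max _ _).trans
        (max_le (norm_lbinom_intCast_le_one N n) hdiff)

lemma norm_natCast_sub_one (hp : 1 < p) (hpL : ‖(p : L)‖ = (p : ℝ)⁻¹) : ‖(p : L) - 1‖ = 1 := by
  rw [sub_eq_add_neg, IsUltrametricDist.norm_add_eq_max_of_norm_ne_norm, hpL, norm_neg, norm_one,
    max_eq_right (inv_natCast_lt_one hp).le]
  rw [hpL, norm_neg, norm_one]
  exact (inv_natCast_lt_one hp).ne

lemma exists_intCast_near_inv_natCast_sub_one (hp : 1 < p) (hpL : ‖(p : L)‖ = (p : ℝ)⁻¹)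
    {ε : ℝ} (hε : 0 < ε) : ∃ N : ℤ, ‖((p : L) - 1)⁻¹ - N‖ < ε := by
  obtain ⟨m, hm⟩ := exists_pow_lt_of_lt_one hε (inv_natCast_lt_one hp)
  refine ⟨-∑ i ∈ range m, (p : ℤ) ^ i, ?_⟩
  have hp1 : (p : L) - 1 ≠ 0 := by
    rw [← norm_ne_zero_iff, norm_natCast_sub_one hp hpL]
    exact one_ne_zero
  -- `-(1 + p + ⋯ + p^(m-1)) = (1 - p^m)/(p - 1)`
  have h : ((p : L) - 1)⁻¹ - ((-∑ i ∈ range m, (p : ℤ) ^ i : ℤ) : L)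
      = ((p : L) - 1)⁻¹ * (p : L) ^ m := by
    push_cast
    field_simp
    linear_combination geom_sum_mul (p : L) m
  rw [h, norm_mul, norm_inv, norm_natCast_sub_one hp hpL, norm_pow, hpL]
  simpa using hm

lemma norm_natCast_choose_le_s6 (hp : p.Prime) (hpL : ‖(p : L)‖ = (p : ℝ)⁻¹) {i : ℕ} (hi0 : i ≠ 0)
    (hip : i < p) : ‖(p.choose i : L)‖ ≤ (p : ℝ)⁻¹ := by
  obtain ⟨k, hk⟩ := hp.dvd_choose_self hi0 hip
  rw [hk, Nat.cast_mul, norm_mul, hpL]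
  exact mul_le_of_le_one_right (by positivity) (IsUltrametricDist.norm_natCast_le_one L k)

lemma isDecayBounded_natCast_mul_yF (hp : p.Prime) (hpL : ‖(p : L)‖ = (p : ℝ)⁻¹) :
    IsDecayBounded (p - 1) (p : ℝ)⁻¹ 0 (fun j => (p : L) * yF p j) := by
  have hp0 : (p : L) ≠ 0 := by
    rw [← norm_ne_zero_iff, hpL]
    exact inv_ne_zero (Nat.cast_ne_zero.2 hp.ne_zero)
  have hp1 := hp.one_lt
  intro j
  simp only [yF, mul_sum]
  refine IsUltrametricDist.norm_sum_le_of_forall_le_of_nonneg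
    (decayBound_nonneg (by positivity) _) fun i hi => ?_
  rw [mem_Ico] at hi
  split_ifs with hj
  · have hoff : 0 - j = ((p - 1 : ℕ) : ℤ) * ((p - i : ℕ) : ℤ) := by
      rw [hj, Nat.cast_sub hp1.le, Nat.cast_sub hi.2.le]
      push_cast
      ring
    rw [mul_div_cancel₀ _ hp0, hoff, decayBound_natCast_mul_of_le (by omega) (by omega) (by omega)]
    exact norm_natCast_choose_le_s6 hp hpL (by omega) hi.2
  · simpa using decayBound_nonneg (by positivity) _

lemma isDecayBounded_FE (hp : p.Prime) (hpL : ‖(p : L)‖ = (p : ℝ)⁻¹) :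
    IsDecayBounded (p - 1) (p : ℝ)⁻¹ p (FE p : ℤ → L) := by
  have hp1 := hp.one_lt
  have hy := (isDecayBounded_natCast_mul_yF hp hpL).pow (by omega) (by positivity)
    (inv_natCast_lt_one hp1).le
  have hbinom : ‖((p : L) - 1)⁻¹‖ = 1 := by rw [norm_inv, norm_natCast_sub_one hp1 hpL, inv_one]
  intro j
  rw [FE_apply]
  refine IsUltrametricDist.norm_tsum_le_of_forall_le_of_nonneg
    (decayBound_nonneg (by positivity) _) fun n => ?_
  rw [norm_mul]
  refine (mul_le_of_le_one_left (norm_nonneg _) (norm_lbinom_le_one_s6 hbinom.le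
    (fun ε hε => exists_intCast_near_inv_natCast_sub_one hp1 hpL hε) n)).trans ?_
  simpa using hy n (j - p)

lemma FE_apply_self (hp : p.Prime) (hpL : ‖(p : L)‖ = (p : ℝ)⁻¹) : (FE p : ℤ → L) p = 1 := by
  have hp1 := hp.one_lt
  have htop := (isDecayBounded_natCast_mul_yF hp hpL).pow_apply_mul (by omega) (by positivity)
    (inv_natCast_lt_one hp1).le
  rw [FE_apply, sub_self, tsum_eq_single 0 fun n hn => ?_]
  · simp [powE, oneE, lbinom]
  · rw [show (0 : ℤ) = 0 * n by simp, htop, yF_apply_zero hp1, mul_zero, zero_pow hn, mul_zero]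

lemma isDecayBounded_zpowE_FE [CompleteSpace L] (hp : p.Prime) (hpL : ‖(p : L)‖ = (p : ℝ)⁻¹)
    {Finv : ℤ → L} {C : ℝ} (hFinvC : ∀ j, ‖Finv j‖ ≤ C) (hFinv : mulE (FE p) Finv = oneE)
    (n : ℤ) : IsDecayBounded (p - 1) (p : ℝ)⁻¹ (p * n) (zpowE (FE p) Finv n) ∧
      zpowE (FE p) Finv n (p * n) = 1 := by
  have hp1 := hp.one_lt
  have hd : 0 < p - 1 := by omega
  have hr0 : 0 ≤ (p : ℝ)⁻¹ := by positivity
  have hr1 := inv_natCast_lt_one hp1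
  have hF := isDecayBounded_FE hp hpL
  have hF1 := FE_apply_self hp hpL
  have hG := hF.of_mulE_eq_oneE hd hr0 hr1 hF1 hFinvC hFinv
  have hG1 : Finv (-p) = 1 := by
    have := hF.mul_apply_add hG
    rw [hFinv, hF1, one_mul, add_neg_cancel] at this
    simpa [oneE] using this.symm
  unfold zpowE
  split_ifs with hn
  · obtain ⟨k, rfl⟩ := Int.eq_ofNat_of_zero_le hn
    rw [Int.toNat_natCast]
    exact ⟨hF.pow hd hr0 hr1.le k, by rw [hF.pow_apply_mul hd hr0 hr1.le k, hF1, one_pow]⟩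
  · obtain ⟨k, rfl⟩ := Int.exists_eq_neg_ofNat (not_le.1 hn).le
    rw [neg_neg, Int.toNat_natCast, show (p : ℤ) * -k = -p * k by ring]
    exact ⟨hG.pow hd hr0 hr1.le k, by rw [hG.pow_apply_mul hd hr0 hr1.le k, hG1, one_pow]⟩

end Frobenius

section Target

variable {p : ℕ}

def targetExp (p : ℕ) (q : ℤ) : ℕ := max (if (p : ℤ) ∣ q then 0 else 1) (-(q / p)).toNat

/-- The theorem says exactly that the coefficient of `t^n` in `a_i` has norm at most
`target p (p * n + i)`. -/
def target (p : ℕ) (m : ℤ) : ℝ :=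
  if (p : ℤ) - 1 ∣ m then (p : ℝ)⁻¹ ^ targetExp p (m / ((p : ℤ) - 1)) else 0

lemma targetExp_le_add (hp : 0 < p) (q s : ℤ) {K : ℕ} (hK : 1 ≤ K) (hs : s ≤ p * K) :
    targetExp p q ≤ targetExp p (q + s) + K := by
  have h : (q + s) / p ≤ q / p + K :=
    calc (q + s) / p ≤ (q + p * K) / p := Int.ediv_le_ediv (by omega) (by omega)
      _ = q / p + K := Int.add_mul_ediv_left _ _ (by omega)
  unfold targetExp
  split_ifs <;> omega

lemma target_nonneg (m : ℤ) : 0 ≤ target p m := by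
  unfold target
  split_ifs <;> positivity

lemma target_zero : target p 0 = 1 := by
  simp [target, targetExp]

lemma target_sub_one_mul (hp : 1 < p) (q : ℤ) :
    target p (((p : ℤ) - 1) * q) = (p : ℝ)⁻¹ ^ targetExp p q := by
  rw [target, if_pos (dvd_mul_right _ _), Int.mul_ediv_cancel_left _ (by omega)]

lemma decayBound_mul_target_le (hp : 1 < p) (m n : ℤ) (hn : n ≠ 0) :
    decayBound (p - 1) (p : ℝ)⁻¹ n * target p (m + n) ≤ target p m := by
  by_cases h : 0 ≤ n ∧ ((p - 1 : ℕ) : ℤ) ∣ n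
  swap
  · rw [decayBound, if_neg h, zero_mul]
    exact target_nonneg m
  obtain ⟨hn0, s, rfl⟩ := h
  lift s to ℕ using by nlinarith [show (0 : ℤ) < ((p - 1 : ℕ) : ℤ) by omega]
  have hK : 1 ≤ s ⌈/⌉ (p - 1) :=
    one_le_ceilDiv (by omega) (Nat.pos_of_ne_zero fun h => hn (by simp [h]))
  have hs : s ≤ p * (s ⌈/⌉ (p - 1)) :=
    (le_smul_ceilDiv (by omega : 0 < p - 1)).trans (Nat.mul_le_mul_right _ (Nat.sub_le p 1))
  rw [decayBound_natCast_mul (by omega), show ((p - 1 : ℕ) : ℤ) = (p : ℤ) - 1 by omega]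
  unfold target
  by_cases hm : (p : ℤ) - 1 ∣ m
  · obtain ⟨q, rfl⟩ := hm
    rw [← mul_add, if_pos (dvd_mul_right _ _), if_pos (dvd_mul_right _ _),
      Int.mul_ediv_cancel_left _ (by omega), Int.mul_ediv_cancel_left _ (by omega), ← pow_add]
    refine pow_le_pow_of_le_one (by positivity) (inv_natCast_lt_one hp).le ?_
    rw [add_comm]
    exact targetExp_le_add (by omega) q s hK (by exact_mod_cast hs)
  · rw [if_neg fun h => hm ((dvd_add_left (dvd_mul_right _ _)).1 h), mul_zero]
    exact target_nonneg m

lemma targetExp_mul (hp : 0 < p) (κ : ℤ) : targetExp p (p * κ) = (-κ).toNat := by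
  simp [targetExp, Int.mul_ediv_cancel_left _ (show (p : ℤ) ≠ 0 by omega)]

lemma targetExp_mul_sub (κ : ℤ) {i : ℕ} (hi0 : 0 < i) (hip : i < p) :
    targetExp p (p * κ - i) = (-κ).toNat + 1 := by
  have hdiv : ((p : ℤ) * κ - i) / p = κ - 1 := by
    rw [show (p : ℤ) * κ - i = (p - i) + p * (κ - 1) by ring,
      Int.add_mul_ediv_left _ _ (by omega), Int.ediv_eq_zero_of_lt (by omega) (by omega), zero_add]
  have hndvd : ¬ (p : ℤ) ∣ p * κ - i := fun h => by
    have := Int.le_of_dvd (by omega) ((dvd_sub_right (dvd_mul_right _ _)).1 h)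
    omega
  rw [targetExp, hdiv, if_neg hndvd]
  omega

lemma inv_natCast_pow_toNat_neg (κ : ℤ) :
    (p : ℝ)⁻¹ ^ (-κ).toNat = (p : ℝ) ^ (-(max 0 (-κ)) : ℤ) := by
  rw [zpow_neg, max_comm, ← Int.toNat_eq_max, zpow_natCast, inv_pow]

end Target

section MinimalPolynomial

variable {p : ℕ}

lemma mulE_tpowE_apply (x : ℤ → L) (b j : ℤ) : mulE x (tpowE b) j = x (j - b) :=
  (tsum_eq_single (j - b) fun k hk => by simp [tpowE, show j - k ≠ b by omega]).trans
    (by simp [tpowE])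

lemma powE_tpowE_neg_one (k : ℕ) : powE (tpowE (-1)) k = (tpowE (-k) : ℤ → L) := by
  induction k with
  | zero => funext j; simp [powE, oneE, tpowE]
  | succ k ih =>
    funext j
    rw [powE, ih, mulE, tsum_eq_single (-1) fun l hl => by simp [tpowE, hl]]
    simp only [tpowE, if_true, one_mul]
    exact if_congr (by omega) rfl rfl

lemma coeff_minpoly_eq_zero {autL : L ≃+* L} {Finv : ℤ → L} {a : ℕ → ℤ → L}
    (hmin : powE (tpowE (-1 : ℤ)) p
        + ∑ i ∈ Finset.Icc 1 p,
            mulE (nuF p autL Finv (a i)) (powE (tpowE (-1 : ℤ)) (p - i)) = 0) (m : ℤ) :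
    (if m = 0 then 1 else 0) + ∑ i ∈ Icc 1 p, nuF p autL Finv (a i) (m - i) = 0 := by
  have h := congrFun hmin (m - p)
  simp only [Pi.add_apply, Finset.sum_apply, Pi.zero_apply, powE_tpowE_neg_one,
    mulE_tpowE_apply] at h
  convert h using 2
  · simp [tpowE]
  · refine sum_congr rfl fun i hi => ?_
    rw [mem_Icc] at hi
    congr 1
    omega

end MinimalPolynomial

lemma eq_of_mul_add_eq_mul_add {p i i' : ℕ} (hi : i ∈ Icc 1 p) (hi' : i' ∈ Icc 1 p) {n n' : ℤ}
    (h : p * n' + i' = p * n + i) : (i', n') = (i, n) := by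
  rw [mem_Icc] at hi hi'
  obtain rfl : n' = n := by
    rcases lt_trichotomy n' n with h' | h' | h'
    · nlinarith [mul_le_mul_of_nonneg_left (show n' + 1 ≤ n by omega)
        (show (0 : ℤ) ≤ p by positivity)]
    · exact h'
    · nlinarith [mul_le_mul_of_nonneg_left (show n + 1 ≤ n' by omega)
        (show (0 : ℤ) ≤ p by positivity)]
  obtain rfl : i' = i := by omega
  rfl

/-- The equations `heq` form a triangular system for the unknowns `a i n`, placed at
`m = p * n + i`, whose entries below the diagonal decay like `decayBound`; its solutions are
bounded by every supersolution `T`. -/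
theorem norm_le_of_sum_tsum_eq_zero [CompleteSpace L] [IsUltrametricDist L] {p d : ℕ} {r : ℝ}
    (hp : 0 < p) (hd : 0 < d) (hr0 : 0 ≤ r) (hr1 : r < 1) {σ : L ≃+* L}
    (hσ : ∀ x, ‖σ x‖ = ‖x‖) {Φ : ℤ → ℤ → L} (hΦ : ∀ n, IsDecayBounded d r (p * n) (Φ n))
    (hΦ1 : ∀ n, Φ n (p * n) = 1) {a : ℕ → ℤ → L} {C : ℝ} (ha : ∀ i ∈ Icc 1 p, ∀ n, ‖a i n‖ ≤ C)
    (heq : ∀ m, (if m = 0 then 1 else 0) + ∑ i ∈ Icc 1 p, ∑' n, σ (a i n) * Φ n (m - i) = 0)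
    {T : ℤ → ℝ} (hT0 : ∀ m, 0 ≤ T m) (hT1 : 1 ≤ T 0)
    (hT : ∀ m n, n ≠ 0 → decayBound d r n * T (m + n) ≤ T m) {i : ℕ} (hi : i ∈ Icc 1 p)
    (n : ℤ) : ‖a i n‖ ≤ T (p * n + i) := by
  refine le_of_forall_le_max_imp_le_max_mul (u := fun x : Icc 1 p × ℤ => ‖a x.1 x.2‖)
    (T := fun x => T (p * x.2 + x.1)) hr0 hr1 (fun _ => hT0 _) (fun x => ha _ x.1.2 _) ?_
    (⟨i, hi⟩, n)
  rintro ε hε H ⟨⟨i, hi⟩, n⟩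
  set m := (p : ℤ) * n + i
  have hoff : ∀ i' ∈ Icc 1 p, ∀ n', (i', n') ≠ (i, n) →
      ‖σ (a i' n') * Φ n' (m - i')‖ ≤ max (T m) (r * ε) := by
    intro i' hi' n' hne
    refine norm_mul_le_max_of_decayBound hd hr0 hr1.le hT
      (n := p * n' + i' - m) (fun h => hne (eq_of_mul_add_eq_mul_add hi hi' (by omega))) hε ?_ ?_
    · rw [hσ, add_sub_cancel]
      exact H (⟨i', hi'⟩, n')
    · convert hΦ n' (m - i') using 2
      ring
  rw [← hσ, show σ (a i n) = σ (a i n) * Φ n (m - i) by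
    rw [show m - i = p * n by ring, hΦ1, mul_one]]
  refine norm_apply_le_of_add_sum_tsum_eq_zero (f := fun i n' => σ (a i n') * Φ n' (m - i))
    (heq m) ?_ hi ?_ n hoff
  · split_ifs with hm
    · rw [norm_one, hm]
      exact hT1.trans (le_max_left _ _)
    · simpa using (hT0 m).trans (le_max_left _ _)
  · refine summable_of_norm_le_mul_decayBound hd hr0 hr1 (C := C) (e := fun n' => p * n' - (m - i))
      (fun x y h => mul_left_cancel₀ (by positivity) (sub_left_injective h)) fun n' => ?_
    rw [norm_mul, hσ]
    exact mul_le_mul (ha i hi n') (hΦ n' _) (norm_nonneg _) ((norm_nonneg _).trans (ha i hi n'))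

lemma IsE.comp_sub {x : ℤ → L} (hx : IsE x) (k : ℤ) : IsE fun j => x (j - k) := by
  obtain ⟨⟨C, hC⟩, hlim⟩ := hx
  refine ⟨⟨C, fun n => hC _⟩, fun ε hε => ?_⟩
  obtain ⟨N, hN⟩ := hlim ε hε
  exact ⟨N + k, fun n hn => hN _ (by omega)⟩

lemma IsE.const_mul {x : ℤ → L} (hx : IsE x) (c : L) : IsE fun j => c * x j := by
  obtain ⟨⟨C, hC⟩, hlim⟩ := hx
  refine ⟨⟨‖c‖ * C, fun n => ?_⟩, fun ε hε => ?_⟩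
  · rw [norm_mul]
    exact mul_le_mul_of_nonneg_left (hC n) (norm_nonneg c)
  obtain ⟨N, hN⟩ := hlim (ε / (‖c‖ + 1)) (by positivity)
  refine ⟨N, fun n hn => ?_⟩
  rw [norm_mul]
  calc ‖c‖ * ‖x n‖ ≤ (‖c‖ + 1) * (ε / (‖c‖ + 1)) :=
        mul_le_mul (by linarith) (hN n hn) (norm_nonneg _) (by positivity)
    _ = ε := by field_simp

lemma exists_forall_norm_le_of_isE {ι : Type*} {s : Finset ι} {a : ι → ℤ → L}
    (h : ∀ i ∈ s, IsE (a i)) : ∃ C, ∀ i ∈ s, ∀ n, ‖a i n‖ ≤ C := by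
  choose! C hC using fun i hi => (h i hi).1
  exact ⟨∑ i ∈ s, |C i|, fun i hi n => (hC i hi n).trans ((le_abs_self _).trans
    (single_le_sum (fun j _ => abs_nonneg (C j)) hi))⟩

section MemB

variable {p : ℕ}

lemma memB_of_norm_le_target (hp : 1 < p) {x : ℤ → L} (hx : IsE x)
    (hxT : ∀ n, ‖x n‖ ≤ target p (p * n + p)) : MemB p fun j => x (j - 1) := by
  refine ⟨hx.comp_sub 1, fun j hj => norm_le_zero_iff.1 ((hxT _).trans_eq ?_), fun κ => ?_⟩
  · rw [target, if_neg fun h => hj ?_]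
    rw [show (p : ℤ) * (j - 1) + p = ((p : ℤ) - 1) * j + j by ring] at h
    exact (dvd_add_right (dvd_mul_right _ _)).1 h
  · have := hxT (((p : ℤ) - 1) * κ - 1)
    rwa [show (p : ℤ) * (((p : ℤ) - 1) * κ - 1) + p = ((p : ℤ) - 1) * (p * κ) by ring,
      target_sub_one_mul hp, targetExp_mul (by omega), inv_natCast_pow_toNat_neg] at this

lemma memB_of_norm_le_target_of_lt (hp : 1 < p) (hpL : ‖(p : L)‖ = (p : ℝ)⁻¹) {i : ℕ}
    (hi0 : 0 < i) (hip : i < p) {x : ℤ → L} (hx : IsE x)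
    (hxT : ∀ n, ‖x n‖ ≤ target p (p * n + i)) : MemB p fun j => (p : L)⁻¹ * x (j - i) := by
  have hpinv : ‖(p : L)⁻¹‖ = p := by rw [norm_inv, hpL, inv_inv]
  refine ⟨(hx.comp_sub i).const_mul _, fun j hj => ?_, fun κ => ?_⟩
  · show (p : L)⁻¹ * x (j - i) = 0
    rw [norm_le_zero_iff.1 ((hxT _).trans_eq ?_), mul_zero]
    rw [target, if_neg fun h => hj ?_]
    rw [show (p : ℤ) * (j - i) + i = ((p : ℤ) - 1) * (j - i) + j by ring] at h
    exact (dvd_add_right (dvd_mul_right _ _)).1 h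
  · have := hxT (((p : ℤ) - 1) * κ - i)
    rw [show (p : ℤ) * (((p : ℤ) - 1) * κ - i) + i = ((p : ℤ) - 1) * (p * κ - i) by ring,
      target_sub_one_mul hp, targetExp_mul_sub κ hi0 hip, pow_succ] at this
    rw [norm_mul, hpinv, ← inv_natCast_pow_toNat_neg]
    calc (p : ℝ) * ‖x (((p : ℤ) - 1) * κ - i)‖
        ≤ p * ((p : ℝ)⁻¹ ^ (-κ).toNat * (p : ℝ)⁻¹) := by gcongr
      _ = (p : ℝ)⁻¹ ^ (-κ).toNat := by field_simp

end MemB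

theorem statement_6_general {p : ℕ} (hp : p.Prime)
    {L : Type*} [NormedField L] [CompleteSpace L] [IsUltrametricDist L]
    (hpL : ‖(p : L)‖ = (p : ℝ)⁻¹)
    (autL : L ≃+* L) (hautL : ∀ a : L, ‖autL a‖ = ‖a‖)
    (Finv : ℤ → L) (hFinvE : IsE Finv) (hFinv : mulE (FE p) Finv = oneE)
    (a : ℕ → ℤ → L) (haE : ∀ i ∈ Finset.Icc 1 p, IsE (a i))
    (hmin : powE (tpowE (-1 : ℤ)) p
        + ∑ i ∈ Finset.Icc 1 p,
            mulE (nuF p autL Finv (a i)) (powE (tpowE (-1 : ℤ)) (p - i)) = 0) :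
    (∃ z : ℤ → L, MemB p z ∧ a p = fun m => z (m + 1)) ∧
    ∀ i ∈ Finset.Icc 1 (p - 1), ∃ z : ℤ → L, MemB p z ∧
      a i = fun m => (p : L) * z (m + (i : ℤ)) := by
  have hp1 := hp.one_lt
  obtain ⟨CF, hCF⟩ := hFinvE.1
  obtain ⟨C, hC⟩ := exists_forall_norm_le_of_isE haE
  have hΦ := isDecayBounded_zpowE_FE hp hpL hCF hFinv
  have ha : ∀ i ∈ Icc 1 p, ∀ n, ‖a i n‖ ≤ target p (p * n + i) :=
    fun i hi => norm_le_of_sum_tsum_eq_zero hp.pos (by omega) (by positivity)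
      (inv_natCast_lt_one hp1) hautL (fun n => (hΦ n).1)
      (fun n => (hΦ n).2) hC (coeff_minpoly_eq_zero hmin) target_nonneg target_zero.ge
      (decayBound_mul_target_le hp1) hi
  have hpIcc : p ∈ Icc 1 p := mem_Icc.2 ⟨hp1.le, le_rfl⟩
  refine ⟨⟨_, memB_of_norm_le_target hp1 (haE p hpIcc) (ha p hpIcc), by simp⟩, fun i hi => ?_⟩
  obtain ⟨hi0, hip⟩ := mem_Icc.1 hi
  have hiIcc : i ∈ Icc 1 p := mem_Icc.2 ⟨hi0, by omega⟩
  refine ⟨_, memB_of_norm_le_target_of_lt hp1 hpL hi0 (by omega) (haE i hiIcc) (ha i hiIcc), ?_⟩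
  have hp0 : (p : L) ≠ 0 := by
    rw [← norm_ne_zero_iff, hpL]
    exact inv_ne_zero (Nat.cast_ne_zero.2 hp.ne_zero)
  simp [hp0]

/-- Writing the minimal polynomial of `t⁻¹` over `ν(ℰ)` as
`Q(X) = X^p + ν(a₁)X^{p-1} + ⋯ + ν(a_p)`, one has `a_p ∈ t⁻¹ℬ` and
`a_i ∈ p t^{-i} ℬ` for `1 ≤ i ≤ p-1`. Here `ν` is the type 2 Frobenius `t ↦ F`. -/
theorem statement_6 {p : ℕ} (hp : p.Prime) (hp3 : 3 ≤ p)
    {L : Type*} [NormedField L] [CompleteSpace L] [IsUltrametricDist L]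
    (hpL : ‖(p : L)‖ = (p : ℝ)⁻¹)
    (autL : L ≃+* L) (hautL : ∀ a : L, ‖autL a‖ = ‖a‖)
    (Finv : ℤ → L) (hFinvE : IsE Finv) (hFinv : mulE (FE p) Finv = oneE)
    (a : ℕ → ℤ → L) (haE : ∀ i ∈ Finset.Icc 1 p, IsE (a i))
    (hmin : powE (tpowE (-1 : ℤ)) p
        + ∑ i ∈ Finset.Icc 1 p,
            mulE (nuF p autL Finv (a i)) (powE (tpowE (-1 : ℤ)) (p - i)) = 0) :
    (∃ z : ℤ → L, MemB p z ∧ a p = fun m => z (m + 1)) ∧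
    ∀ i ∈ Finset.Icc 1 (p - 1), ∃ z : ℤ → L, MemB p z ∧
      a i = fun m => (p : L) * z (m + (i : ℤ)) :=
  statement_6_general hp hpL autL hautL Finv hFinvE hFinv a haE hmin

end AmiceStmt
end
end

section
/- Let x, y ∈ 𝐜(I) have all entries nonzero and satisfy x > y. If u: 𝐜(I,x) → 𝐬(I) is a continuous L-linear map with u(𝐜(I,x)) ⊆ 𝐬(I,y), then u, viewed as an operator from 𝐜(I,x) to itself (note 𝐬(I,y) ⊆ 𝐜(I,x) since x > y), is completely continuous. -/
/-!
Identify 𝐜(I,x) with 𝐜(I) = C₀(I, L) (discrete `I`) via `g ↦ (gᵢ xᵢ)`. Each functional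
`f ↦ u(f)ᵢ / yᵢ` is continuous, and since `u` lands in 𝐬(I,y) the family of them is pointwise
bounded, so by Banach–Steinhaus `|u(f)ᵢ| ≤ K |yᵢ| ‖f‖ₓ` uniformly. As `|yᵢ| / |xᵢ| → 0`, the
coordinates with `|yᵢ| > δ |xᵢ|` are finitely many, and truncating `u(f)` to them gives a
finite-rank operator at distance at most `K δ` from `u`.
-/

open Filter Topology
open scoped Classical

noncomputable section

namespace FredholmStmt

variable {L : Type*} [NontriviallyNormedField L]

/-- Membership in `𝐬(I,b)`: families of the form `(cᵢ bᵢ)` with bounded `(cᵢ)`. -/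
def sBall {I : Type*} (b : I → L) : Set (I → L) :=
  {f | ∃ C : ℝ, ∀ i, ‖f i‖ ≤ C * ‖b i‖}

/-- Membership in `𝐜(I,b)`: families of the form `(cᵢ bᵢ)` with `cᵢ → 0` along the
cofinite filter. -/
def cBall {I : Type*} (b : I → L) : Set (I → L) :=
  {f | f ∈ sBall b ∧ ∀ ε : ℝ, 0 < ε → {i | ε * ‖b i‖ < ‖f i‖}.Finite}

/-- `b ∈ 𝐜(I)`: the family `b` tends to `0` along the cofinite filter on `I`. -/
def cZero {I : Type*} (b : I → L) : Prop :=
  ∀ ε : ℝ, 0 < ε → {i | ε < ‖b i‖}.Finite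

/-- The partial order `x > y` on `𝐜(I)`: `v_p(yᵢ) - v_p(xᵢ) → ∞`, i.e. `‖yᵢ‖/‖xᵢ‖ → 0`,
along the cofinite filter. -/
def gtRel {I : Type*} (x y : I → L) : Prop :=
  ∀ ε : ℝ, 0 < ε → {i | ε * ‖x i‖ < ‖y i‖}.Finite

/-- The norm of `𝐜(I,b)` and `𝐬(I,b)` (for which `B(I,b)` is an integral basis). -/
def normB {I : Type*} (b f : I → L) : ℝ := ⨆ i, ‖f i‖ / ‖b i‖

/-- The sup norm of `𝐬(I)`. -/
def supNorm {I : Type*} (f : I → L) : ℝ := ⨆ i, ‖f i‖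

/-- `u` is `L`-linear on the subspace `D`. -/
def IsLinearOn {I : Type*} (u : (I → L) → I → L) (D : Set (I → L)) : Prop :=
  (∀ f ∈ D, ∀ g ∈ D, u (f + g) = u f + u g) ∧
    ∀ (c : L), ∀ f ∈ D, u (c • f) = c • u f

/-- `u` has finite-dimensional image on `D`. -/
def FiniteRankOn {I : Type*} (u : (I → L) → I → L) (D : Set (I → L)) : Prop :=
  ∃ G : Submodule L (I → L), FiniteDimensional L G ∧ ∀ f ∈ D, u f ∈ G

/-- `u` is a completely continuous operator on `𝐜(I,b)`: it is the limit, in the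
operator norm, of continuous operators with finite-dimensional image. -/
def CompletelyContinuousOn {I : Type*} (u : (I → L) → I → L) (b : I → L) : Prop :=
  ∀ ε : ℝ, 0 < ε → ∃ u' : (I → L) → I → L,
    IsLinearOn u' (cBall b) ∧
    (∃ C : ℝ, ∀ f ∈ cBall b, normB b (u' f) ≤ C * normB b f) ∧
    FiniteRankOn u' (cBall b) ∧
    ∀ f ∈ cBall b, normB b (u f - u' f) ≤ ε * normB b f

/-- The matrix `(n_{ij})` of `u` in the basis `B(I,b) = {bⱼ eⱼ}`:
`u(bⱼ eⱼ) = ∑ᵢ n_{ij} bᵢ eᵢ`. -/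
def matrixOf {I : Type*} (u : (I → L) → I → L) (b : I → L) : I → I → L :=
  fun i j => u (fun k => if k = j then b j else 0) i / b i

/-- The term of the Fredholm determinant attached to a finite subset `S` of the index
set: `∑_{σ ∈ Sym(S)} sgn(σ) ∏_{i ∈ S} n_{i σ(i)}`. -/
def fredholmTerm {ι : Type*} (nm : ι → ι → L) (S : Finset ι) : L :=
  ∑ σ : Equiv.Perm {i // i ∈ S},
    ((Equiv.Perm.sign σ : ℤ) : L) * ∏ i : {i // i ∈ S}, nm i.1 (σ i).1

/-- The `n`-th coefficient `cₙ` of the Fredholm determinant `det(1 - su) = ∑ cₙ sⁿ`: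
`cₙ = (-1)ⁿ ∑_{|S| = n} ∑_{σ ∈ Sym(S)} sgn(σ) ∏_{i ∈ S} n_{i σ(i)}`. -/
def detCoeff {ι : Type*} (nm : ι → ι → L) (n : ℕ) : L :=
  (-1 : L) ^ n * ∑' S : {S : Finset ι // S.card = n}, fredholmTerm nm S.1

/-- The additive valuation `v_p` on `L` (with values in `EReal`, `v_p(0) = ⊤`),
normalized by `v_p(p) = 1` when `‖p‖ = p⁻¹`. -/
def vpE (p : ℕ) (z : L) : EReal :=
  if z = 0 then ⊤ else ((-(Real.log ‖z‖ / Real.log p) : ℝ) : EReal)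

/-- `col_w(nm)`: the smallest `p`-adic valuation occurring in the column `w` of the
matrix `nm`. -/
def colOf {ι : Type*} (p : ℕ) (nm : ι → ι → L) (w : ι) : EReal :=
  ⨅ w' : ι, vpE p (nm w' w)

section

variable {I : Type*}

lemma bddAbove_range_of_finite_setOf_lt {r : I → ℝ} {a : ℝ} (h : {i | a < r i}.Finite) :
    BddAbove (Set.range r) := by
  obtain ⟨B, hB⟩ := (h.image r).bddAbove
  refine ⟨max a B, ?_⟩
  rintro _ ⟨i, rfl⟩
  by_cases hi : a < r i
  · exact le_max_of_le_right (hB ⟨i, hi, rfl⟩)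
  · exact le_max_of_le_left (not_lt.1 hi)

lemma cZero.bddAbove {b : I → L} (hb : cZero b) : BddAbove (Set.range fun i => ‖b i‖) :=
  bddAbove_range_of_finite_setOf_lt (hb 1 one_pos)

lemma gtRel.exists_norm_le_mul {x y : I → L} (hxy : gtRel x y) (hx0 : ∀ i, x i ≠ 0) :
    ∃ M, 0 ≤ M ∧ ∀ i, ‖y i‖ ≤ M * ‖x i‖ := by
  have hfin : {i | 1 < ‖y i‖ / ‖x i‖}.Finite := (hxy 1 one_pos).subset fun i hi => by
    simpa [one_mul, one_lt_div (norm_pos_iff.2 (hx0 i))] using hi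
  obtain ⟨M, hM⟩ := bddAbove_range_of_finite_setOf_lt hfin
  exact ⟨max M 0, le_max_right _ _, fun i => (div_le_iff₀ (norm_pos_iff.2 (hx0 i))).1 <|
    (hM ⟨i, rfl⟩).trans (le_max_left _ _)⟩

lemma bddAbove_of_mem_sBall {f b : I → L} (hf : f ∈ sBall b)
    (hb : BddAbove (Set.range fun i => ‖b i‖)) : BddAbove (Set.range fun i => ‖f i‖) := by
  obtain ⟨C, hC⟩ := hf
  obtain ⟨B, hB⟩ := hb
  refine ⟨max C 0 * B, ?_⟩
  rintro _ ⟨i, rfl⟩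
  exact (hC i).trans (mul_le_mul (le_max_left _ _) (hB ⟨i, rfl⟩) (norm_nonneg _) (le_max_right _ _))

lemma norm_le_supNorm {f : I → L} (hf : BddAbove (Set.range fun i => ‖f i‖)) (i : I) :
    ‖f i‖ ≤ supNorm f :=
  le_ciSup hf i

lemma normB_nonneg (b f : I → L) : 0 ≤ normB b f :=
  Real.iSup_nonneg fun _ => div_nonneg (norm_nonneg _) (norm_nonneg _)

lemma normB_le {b f : I → L} {C : ℝ} (hC : 0 ≤ C) (h : ∀ i, ‖f i‖ ≤ C * ‖b i‖) :
    normB b f ≤ C :=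
  Real.iSup_le (fun i => div_le_of_le_mul₀ (norm_nonneg _) hC (h i)) hC

lemma norm_div_norm_le_normB {b f : I → L} (hf : f ∈ sBall b) (hb : ∀ i, b i ≠ 0) (i : I) :
    ‖f i‖ / ‖b i‖ ≤ normB b f := by
  obtain ⟨C, hC⟩ := hf
  exact le_ciSup ⟨C, by rintro _ ⟨j, rfl⟩; exact (div_le_iff₀ (norm_pos_iff.2 (hb j))).2 (hC j)⟩ i

theorem exists_norm_apply_le_mul_norm_mul {E : Type*} [NormedAddCommGroup E] [NormedSpace L E]
    [CompleteSpace E] {y : I → L} (hy0 : ∀ i, y i ≠ 0) (U : E →ₗ[L] I → L)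
    (hcoord : ∀ i, ∃ C, ∀ g, ‖U g i‖ ≤ C * ‖g‖) (hrow : ∀ g, ∃ C, ∀ i, ‖U g i‖ ≤ C * ‖y i‖) :
    ∃ K, ∀ g i, ‖U g i‖ ≤ K * ‖g‖ * ‖y i‖ := by
  have hcoord' : ∀ i, ∃ C, ∀ g, ‖((y i)⁻¹ • (LinearMap.proj i ∘ₗ U)) g‖ ≤ C * ‖g‖ := by
    intro i
    obtain ⟨C, hC⟩ := hcoord i
    refine ⟨‖y i‖⁻¹ * C, fun g => ?_⟩
    simp only [LinearMap.smul_apply, LinearMap.comp_apply, LinearMap.proj_apply, norm_smul,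
      norm_inv, mul_assoc]
    exact mul_le_mul_of_nonneg_left (hC g) (by positivity)
  let φ : I → E →L[L] L := fun i => LinearMap.mkContinuousOfExistsBound _ (hcoord' i)
  have hφ : ∀ i g, ‖φ i g‖ = ‖U g i‖ / ‖y i‖ := fun i g => by
    simp [φ, div_eq_inv_mul]
  have hy : ∀ i, 0 < ‖y i‖ := fun i => norm_pos_iff.2 (hy0 i)
  obtain ⟨K, hK⟩ := banach_steinhaus (g := φ) fun g => by
    obtain ⟨C, hC⟩ := hrow g
    exact ⟨C, fun i => by rw [hφ, div_le_iff₀ (hy i)]; exact hC i⟩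
  refine ⟨K, fun g i => (div_le_iff₀ (hy i)).1 ?_⟩
  rw [← hφ]
  exact ((φ i).le_opNorm g).trans (mul_le_mul_of_nonneg_right (hK i) (norm_nonneg _))

section Discrete

open scoped ZeroAtInfty

variable [TopologicalSpace I]

def ofC₀ (b : I → L) : C₀(I, L) →ₗ[L] I → L where
  toFun g := ⇑g * b
  map_add' g h := by ext i; simp [add_mul]
  map_smul' c g := by ext i; simp [mul_assoc]

lemma norm_ofC₀_apply_le (b : I → L) (g : C₀(I, L)) (i : I) :
    ‖ofC₀ b g i‖ ≤ ‖g‖ * ‖b i‖ := by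
  simpa [ofC₀, norm_mul] using
    mul_le_mul_of_nonneg_right (g.toBCF.norm_coe_le_norm i) (norm_nonneg (b i))

lemma normB_ofC₀_le (b : I → L) (g : C₀(I, L)) : normB b (ofC₀ b g) ≤ ‖g‖ :=
  normB_le (norm_nonneg g) (norm_ofC₀_apply_le b g)

variable [DiscreteTopology I]

lemma finite_setOf_lt_norm (g : C₀(I, L)) {ε : ℝ} (hε : 0 < ε) : {i | ε < ‖g i‖}.Finite := by
  have hg := zero_at_infty g
  rw [cocompact_eq_cofinite, NormedAddGroup.tendsto_nhds_zero] at hg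
  exact (eventually_cofinite.1 (hg ε hε)).subset fun i hi => not_lt.2 hi.le

lemma ofC₀_mem_cBall (b : I → L) (g : C₀(I, L)) : ofC₀ b g ∈ cBall b := by
  refine ⟨⟨‖g‖, norm_ofC₀_apply_le b g⟩,
    fun ε hε => (finite_setOf_lt_norm g hε).subset fun i hi => ?_⟩
  simp only [Set.mem_ofPred_eq, ofC₀, LinearMap.coe_mk, AddHom.coe_mk, Pi.mul_apply,
    norm_mul] at hi ⊢
  exact lt_of_mul_lt_mul_right hi (norm_nonneg _)

lemma exists_ofC₀_eq {b f : I → L} (hb : ∀ i, b i ≠ 0) (hf : f ∈ cBall b) :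
    ∃ g : C₀(I, L), ofC₀ b g = f ∧ ‖g‖ ≤ normB b f := by
  have hzero : Tendsto (fun i => f i / b i) (cocompact I) (𝓝 0) := by
    rw [cocompact_eq_cofinite, NormedAddGroup.tendsto_nhds_zero]
    intro ε hε
    refine eventually_cofinite.2 ((hf.2 (ε / 2) (half_pos hε)).subset fun i hi => ?_)
    simp only [Set.mem_ofPred_eq, not_lt, norm_div] at hi ⊢
    linarith [(le_div_iff₀ (norm_pos_iff.2 (hb i))).1 hi,
      mul_pos (half_pos hε) (norm_pos_iff.2 (hb i))]
  refine ⟨⟨⟨fun i => f i / b i, continuous_of_discreteTopology⟩, hzero⟩, ?_, ?_⟩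
  · ext i
    exact div_mul_cancel₀ (f i) (hb i)
  · rw [← ZeroAtInftyContinuousMap.norm_toBCF_eq_norm,
      BoundedContinuousFunction.norm_le (normB_nonneg b f)]
    intro i
    simpa using norm_div_norm_le_normB hf.1 hb i

end Discrete

theorem exists_norm_apply_le_mul_normB_mul [CompleteSpace L] {x y : I → L}
    (hx0 : ∀ i, x i ≠ 0) (hy0 : ∀ i, y i ≠ 0) {u : (I → L) → I → L}
    (hlin : IsLinearOn u (cBall x))
    (hcoord : ∀ i, ∃ C, ∀ f ∈ cBall x, ‖u f i‖ ≤ C * normB x f)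
    (himg : ∀ f ∈ cBall x, u f ∈ sBall y) :
    ∃ K, 0 ≤ K ∧ ∀ f ∈ cBall x, ∀ i, ‖u f i‖ ≤ K * normB x f * ‖y i‖ := by
  let _ : TopologicalSpace I := ⊥
  have : DiscreteTopology I := ⟨rfl⟩
  let U : ZeroAtInftyContinuousMap I L →ₗ[L] I → L :=
    { toFun g := u (ofC₀ x g)
      map_add' g h := by
        rw [map_add, hlin.1 _ (ofC₀_mem_cBall x g) _ (ofC₀_mem_cBall x h)]
      map_smul' c g := by
        rw [map_smul, hlin.2 c _ (ofC₀_mem_cBall x g), RingHom.id_apply] }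
  have hcoordU : ∀ i, ∃ C, ∀ g, ‖U g i‖ ≤ C * ‖g‖ := fun i => by
    obtain ⟨C, hC⟩ := hcoord i
    exact ⟨max C 0, fun g => (hC _ (ofC₀_mem_cBall x g)).trans <|
      mul_le_mul (le_max_left _ _) (normB_ofC₀_le x g) (normB_nonneg _ _) (le_max_right _ _)⟩
  obtain ⟨K, hK⟩ := exists_norm_apply_le_mul_norm_mul hy0 U hcoordU
    fun g => himg _ (ofC₀_mem_cBall x g)
  refine ⟨max K 0, le_max_right _ _, fun f hf i => ?_⟩
  obtain ⟨g, rfl, hg⟩ := exists_ofC₀_eq hx0 hf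
  calc ‖u (ofC₀ x g) i‖ ≤ K * ‖g‖ * ‖y i‖ := hK g i
    _ ≤ max K 0 * normB x (ofC₀ x g) * ‖y i‖ := by gcongr; exact le_max_left _ _

lemma IsLinearOn.indicator {u : (I → L) → I → L} {D : Set (I → L)} (hu : IsLinearOn u D)
    (s : Set I) : IsLinearOn (fun f => s.indicator (u f)) D :=
  ⟨fun f hf g hg => by beta_reduce; rw [hu.1 f hf g hg]; exact Set.indicator_add' s _ _,
    fun c f hf => by beta_reduce; rw [hu.2 c f hf]; exact Set.indicator_const_smul s c _⟩

lemma finiteRankOn_indicator (u : (I → L) → I → L) (D : Set (I → L)) (S : Finset I) :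
    FiniteRankOn (fun f => (S : Set I).indicator (u f)) D := by
  refine ⟨Submodule.span L ((fun j => Pi.single j (1 : L)) '' S),
    FiniteDimensional.span_of_finite L (S.finite_toSet.image _), fun f _ => ?_⟩
  have : (S : Set I).indicator (u f) = ∑ j ∈ S, u f j • Pi.single j (1 : L) := by
    ext i
    simp [Set.indicator_apply, Finset.sum_apply, Pi.single_apply]
  show (S : Set I).indicator (u f) ∈ _
  rw [this]
  exact Submodule.sum_mem _ fun j hj =>
    Submodule.smul_mem _ _ (Submodule.subset_span ⟨j, hj, rfl⟩)

theorem completelyContinuousOn_of_norm_apply_le {x y : I → L} (hx0 : ∀ i, x i ≠ 0)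
    (hxy : gtRel x y) {u : (I → L) → I → L} (hlin : IsLinearOn u (cBall x)) {K : ℝ}
    (hK0 : 0 ≤ K) (hK : ∀ f ∈ cBall x, ∀ i, ‖u f i‖ ≤ K * normB x f * ‖y i‖) :
    CompletelyContinuousOn u x := by
  obtain ⟨M, hM0, hM⟩ := hxy.exists_norm_le_mul hx0
  intro ε hε
  set δ := ε / (K + 1)
  have hδ : 0 < δ := by positivity
  have hKδ : K * δ ≤ ε := by
    rw [mul_div_assoc', div_le_iff₀ (by positivity)]
    nlinarith
  set S := (hxy δ hδ).toFinset
  refine ⟨fun f => (S : Set I).indicator (u f), hlin.indicator _, ⟨K * M, fun f hf => ?_⟩,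
    finiteRankOn_indicator u _ S, fun f hf => ?_⟩
  all_goals have hf0 := normB_nonneg x f
  · refine normB_le (by positivity) fun i => ?_
    calc ‖(S : Set I).indicator (u f) i‖ ≤ ‖u f i‖ := norm_indicator_le_norm_self _ _
      _ ≤ K * normB x f * (M * ‖x i‖) := (hK f hf i).trans (by gcongr; exact hM i)
      _ = K * M * normB x f * ‖x i‖ := by ring
  · rw [← Set.indicator_compl]
    refine normB_le (by positivity) fun i => ?_
    by_cases hi : i ∈ S
    · rw [Set.indicator_of_notMem (by simpa using hi), norm_zero]
      positivity
    · have hyi : ‖y i‖ ≤ δ * ‖x i‖ := by simpa [S] using hi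
      calc ‖(S : Set I)ᶜ.indicator (u f) i‖ = ‖u f i‖ := by simp [hi]
        _ ≤ K * normB x f * (δ * ‖x i‖) := (hK f hf i).trans (by gcongr)
        _ = (K * δ) * normB x f * ‖x i‖ := by ring
        _ ≤ ε * normB x f * ‖x i‖ := by gcongr

end

theorem statement_10_general {L : Type*} [NontriviallyNormedField L] [CompleteSpace L]
    {I : Type*}
    (x y : I → L) (hx0 : ∀ i, x i ≠ 0) (hy0 : ∀ i, y i ≠ 0)
    (hyc : cZero y) (hxy : gtRel x y)
    (u : (I → L) → I → L)
    (hlin : IsLinearOn u (cBall x))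
    (hcont : ∃ C : ℝ, ∀ f ∈ cBall x, supNorm (u f) ≤ C * normB x f)
    (himg : ∀ f ∈ cBall x, u f ∈ sBall y) :
    CompletelyContinuousOn u x := by
  obtain ⟨C, hC⟩ := hcont
  have hcoord : ∀ i, ∃ C, ∀ f ∈ cBall x, ‖u f i‖ ≤ C * normB x f := fun i =>
    ⟨C, fun f hf => (norm_le_supNorm (bddAbove_of_mem_sBall (himg f hf) hyc.bddAbove) i).trans
      (hC f hf)⟩
  obtain ⟨K, hK0, hK⟩ := exists_norm_apply_le_mul_normB_mul hx0 hy0 hlin hcoord himg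
  exact completelyContinuousOn_of_norm_apply_le hx0 hxy hlin hK0 hK

/-- If `x > y` (entries nonzero) and `u : 𝐜(I,x) → 𝐬(I)` is a
continuous `L`-linear map with `u(𝐜(I,x)) ⊆ 𝐬(I,y)`, then `u`, viewed as an operator
from `𝐜(I,x)` to itself, is completely continuous. -/
theorem statement_10 {L : Type*} [NontriviallyNormedField L] [CompleteSpace L]
    [IsUltrametricDist L] {I : Type*} [Countable I] [Infinite I]
    (x y : I → L) (hx0 : ∀ i, x i ≠ 0) (hy0 : ∀ i, y i ≠ 0)
    (hxc : cZero x) (hyc : cZero y) (hxy : gtRel x y)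
    (u : (I → L) → I → L)
    (hlin : IsLinearOn u (cBall x))
    (hcont : ∃ C : ℝ, ∀ f ∈ cBall x, supNorm (u f) ≤ C * normB x f)
    (himg : ∀ f ∈ cBall x, u f ∈ sBall y) :
    CompletelyContinuousOn u x :=
  statement_10_general x y hx0 hy0 hyc hxy u hlin hcont himg

end FredholmStmt
end
end

section
/- Let x = (x_i), y = (y_i) ∈ 𝐜(I) have all entries nonzero and satisfy x > y. Let u be a continuous L-linear operator on 𝐜(I,x) which is completely continuous and satisfies u(𝐬(I,y)) ⊆ 𝐬(I,y). Then the Fredholm determinant det(1 − su | B(I,y)) exists (i.e., all the sums defining its coefficients converge), and det(1 − su | B(I,y)) = det(1 − su | B(I,x)) as formal power series in s. -/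
/-!
The matrix of `u` in the basis `B(I,y)` is the conjugate of its matrix in `B(I,x)` by the
diagonal matrix `(yᵢ / xᵢ)`, so the two bases give the same term `∑_σ sgn σ ∏ n_{i σ(i)}` for
every finite `S ⊆ I`, and it remains to see that these terms are summable for `B(I,x)`. Over a
complete ultrametric field a family is summable as soon as it tends to zero, which holds once
the rows of the matrix tend to zero uniformly in the column.

Uniform row decay is where complete continuity enters. For each `ε`, `u` has norm `≤ ε` on a
closed subspace `K` of finite codimension (the closure of the kernel of a finite-rank
approximation). In an ultrametric space every `f` splits as `k + w` with `k ∈ K`,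
`‖k‖ ≤ 2 ‖f‖` and `w` in a fixed finite-dimensional subspace (build a `c`-orthogonal complement
one vector at a time), and on a finite-dimensional subspace row decay is automatic.
-/

open Filter Topology
open scoped Classical

noncomputable section

namespace FredholmStmt

variable {L : Type*} [NontriviallyNormedField L]

section Space

variable {I : Type*} (x : I → L)

lemma zero_mem_cBall : (0 : I → L) ∈ cBall x :=
  ⟨⟨0, fun i => by simp⟩, fun ε hε => by
    simp [not_lt_of_ge (mul_nonneg hε.le (norm_nonneg _))]⟩

lemma add_mem_cBall {f g : I → L} (hf : f ∈ cBall x) (hg : g ∈ cBall x) :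
    f + g ∈ cBall x := by
  obtain ⟨⟨C, hC⟩, hf⟩ := hf
  obtain ⟨⟨D, hD⟩, hg⟩ := hg
  refine ⟨⟨C + D, fun i => ?_⟩, fun ε hε => ?_⟩
  · exact (norm_add_le _ _).trans (by linarith [hC i, hD i])
  · refine ((hf _ (half_pos hε)).union (hg _ (half_pos hε))).subset fun i hi => ?_
    by_contra h
    simp only [Set.mem_union, Set.mem_ofPred_eq, not_or, not_lt, Pi.add_apply] at h hi
    linarith [norm_add_le (f i) (g i)]

lemma smul_mem_cBall (c : L) {f : I → L} (hf : f ∈ cBall x) : c • f ∈ cBall x := by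
  obtain ⟨⟨C, hC⟩, hf⟩ := hf
  rcases eq_or_ne c 0 with rfl | hc
  · simpa using zero_mem_cBall x
  have hc : 0 < ‖c‖ := norm_pos_iff.2 hc
  refine ⟨⟨‖c‖ * C, fun i => ?_⟩,
    fun ε hε => (hf _ (div_pos hε hc)).subset fun i hi => ?_⟩
  · simpa [norm_smul, mul_assoc] using mul_le_mul_of_nonneg_left (hC i) hc.le
  · simp only [Set.mem_ofPred_eq, Pi.smul_apply, norm_smul] at hi ⊢
    rw [div_mul_eq_mul_div, div_lt_iff₀ hc]
    linarith

def cSubmodule : Submodule L (I → L) where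
  carrier := cBall x
  zero_mem' := zero_mem_cBall x
  add_mem' := add_mem_cBall x
  smul_mem' := smul_mem_cBall x

/-- `𝐜(I,x)` with the norm `normB x`. This is a type synonym because `↥(cSubmodule x)` already
carries the topology of pointwise convergence. -/
def CSpace := ↥(cSubmodule x)

instance : AddCommGroup (CSpace x) := inferInstanceAs (AddCommGroup (cSubmodule x))

instance : Module L (CSpace x) := inferInstanceAs (Module L (cSubmodule x))

instance : CoeFun (CSpace x) fun _ => I → L := ⟨@Subtype.val _ (· ∈ cSubmodule x)⟩

instance : Norm (CSpace x) := ⟨fun f => normB x f⟩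

namespace CSpace

variable {x}

lemma norm_def (f : CSpace x) : ‖f‖ = normB x f := rfl

lemma mem_cBall (f : CSpace x) : ⇑f ∈ cBall x := (f : cSubmodule x).2

@[simp] lemma coe_zero : ⇑(0 : CSpace x) = 0 := rfl

@[simp] lemma coe_add (f g : CSpace x) : ⇑(f + g) = f + g := rfl

@[simp] lemma coe_smul (c : L) (f : CSpace x) : ⇑(c • f) = c • ⇑f := rfl

@[simp] lemma coe_sum {ι : Type*} (s : Finset ι) (f : ι → CSpace x) :
    ⇑(∑ k ∈ s, f k) = ∑ k ∈ s, ⇑(f k) :=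
  map_sum (cSubmodule x).subtype f s

lemma ext {f g : CSpace x} (h : ⇑f = ⇑g) : f = g := Subtype.ext h

lemma norm_nonneg' (f : CSpace x) : 0 ≤ ‖f‖ :=
  Real.iSup_nonneg fun _ => div_nonneg (norm_nonneg _) (norm_nonneg _)

lemma norm_apply_le (f : CSpace x) (i : I) : ‖f i‖ ≤ ‖f‖ * ‖x i‖ := by
  obtain ⟨C, hC⟩ := f.mem_cBall.1
  rcases eq_or_ne (x i) 0 with hxi | hxi
  · simpa [hxi] using hC i
  have hbdd : BddAbove (Set.range fun i => ‖f i‖ / ‖x i‖) := by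
    refine ⟨max C 0, ?_⟩
    rintro _ ⟨k, rfl⟩
    rcases eq_or_ne (x k) 0 with hxk | hxk
    · simp [hxk]
    · exact (div_le_iff₀ (norm_pos_iff.2 hxk)).2 ((hC k).trans (by gcongr; apply le_max_left))
  exact (div_le_iff₀ (norm_pos_iff.2 hxi)).1 (le_ciSup hbdd i)

lemma norm_le_of_forall {f : CSpace x} {C : ℝ} (hC : 0 ≤ C)
    (h : ∀ i, ‖f i‖ ≤ C * ‖x i‖) : ‖f‖ ≤ C :=
  Real.iSup_le (fun i => div_le_of_le_mul₀ (norm_nonneg _) hC (h i)) hC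

lemma norm_smul' (c : L) (f : CSpace x) : ‖c • f‖ = ‖c‖ * ‖f‖ := by
  simp only [norm_def, normB, coe_smul, Pi.smul_apply, norm_smul, mul_div_assoc]
  exact (Real.mul_iSup_of_nonneg (norm_nonneg c) _).symm

lemma norm_add_le' (f g : CSpace x) : ‖f + g‖ ≤ ‖f‖ + ‖g‖ :=
  norm_le_of_forall (add_nonneg f.norm_nonneg' g.norm_nonneg') fun i =>
    (norm_add_le _ _).trans <| by
      rw [add_mul]; exact add_le_add (f.norm_apply_le i) (g.norm_apply_le i)

lemma norm_eq_zero_iff' (f : CSpace x) : ‖f‖ = 0 ↔ f = 0 := by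
  refine ⟨fun h => ext (funext fun i => norm_le_zero_iff.1 ?_), fun h => ?_⟩
  · simpa [h] using f.norm_apply_le i
  · exact le_antisymm (norm_le_of_forall le_rfl fun i => by simp [h]) f.norm_nonneg'

instance : NormedAddCommGroup (CSpace x) :=
  NormedAddCommGroup.ofCore
    { norm_nonneg := norm_nonneg'
      norm_smul := norm_smul'
      norm_triangle := norm_add_le'
      norm_eq_zero_iff := norm_eq_zero_iff' }

instance : NormedSpace L (CSpace x) where
  norm_smul_le c f := (norm_smul' c f).le

instance [IsUltrametricDist L] : IsUltrametricDist (CSpace x) :=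
  IsUltrametricDist.isUltrametricDist_of_forall_norm_add_le_max_norm fun f g =>
    norm_le_of_forall (le_max_of_le_left f.norm_nonneg') fun i =>
      (IsUltrametricDist.norm_add_le_max (f i) (g i)).trans <| by
        rw [max_mul_of_nonneg _ _ (norm_nonneg _)]
        exact max_le_max (f.norm_apply_le i) (g.norm_apply_le i)

end CSpace

end Space

section NearComplement

variable {E : Type*} [NormedAddCommGroup E] [IsUltrametricDist E] [NormedSpace L E]

open Metric Submodule

lemma exists_sub_mem_forall_norm_le_mul_norm_add_smul {K : Submodule L E}
    (hK : IsClosed (K : Set E)) {v : E} (hv : v ∉ K) {c : ℝ} (hc : 1 < c) :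
    ∃ q, v - q ∈ K ∧ ∀ g ∈ K, ∀ a : L, ‖g‖ ≤ c * ‖g + a • q‖ := by
  have hd : 0 < infDist v K := (hK.notMem_iff_infDist_pos ⟨0, K.zero_mem⟩).1 hv
  obtain ⟨k₀, hk₀, hvk₀⟩ :=
    (infDist_lt_iff ⟨0, K.zero_mem⟩).1 (lt_mul_of_one_lt_left hd hc)
  refine ⟨v - k₀, by simpa using hk₀, fun g hg a => ?_⟩
  have hsmul : ‖a • (v - k₀)‖ ≤ c * ‖g + a • (v - k₀)‖ := by
    rcases eq_or_ne a 0 with rfl | ha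
    · simp only [zero_smul, norm_zero, add_zero]
      positivity
    have hdist : infDist v K ≤ ‖v - (k₀ - a⁻¹ • g)‖ := by
      rw [← dist_eq_norm]
      exact infDist_le_dist_of_mem (K.sub_mem hk₀ (K.smul_mem _ hg))
    have hrw : g + a • (v - k₀) = a • (v - (k₀ - a⁻¹ • g)) := by
      rw [smul_sub, smul_sub, smul_sub, smul_inv_smul₀ ha]
      abel
    rw [hrw, norm_smul, norm_smul, ← dist_eq_norm v k₀]
    calc ‖a‖ * dist v k₀ ≤ ‖a‖ * (c * ‖v - (k₀ - a⁻¹ • g)‖) := by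
          gcongr
          exact hvk₀.le.trans (by gcongr)
      _ = c * (‖a‖ * ‖v - (k₀ - a⁻¹ • g)‖) := by ring
  calc ‖g‖ = ‖(g + a • (v - k₀)) + -(a • (v - k₀))‖ := by rw [add_neg_cancel_right]
    _ ≤ max ‖g + a • (v - k₀)‖ ‖a • (v - k₀)‖ := by
      simpa only [norm_neg] using
        IsUltrametricDist.norm_add_le_max (g + a • (v - k₀)) (-(a • (v - k₀)))
    _ ≤ c * ‖g + a • (v - k₀)‖ :=
      max_le (le_mul_of_one_le_left (norm_nonneg _) hc.le) hsmul

variable [CompleteSpace L]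

lemma exists_finiteDimensional_sub_mem_of_sup_span_eq_top {K : Submodule L E}
    (hK : IsClosed (K : Set E)) (s : Finset E) (hKs : K ⊔ span L s = ⊤) {c : ℝ} (hc : 1 < c) :
    ∃ W : Submodule L E, FiniteDimensional L W ∧ ∀ f, ∃ k ∈ K, f - k ∈ W ∧ ‖k‖ ≤ c * ‖f‖ := by
  induction s using Finset.induction_on generalizing K c with
  | empty =>
    refine ⟨⊥, inferInstance, fun f => ⟨f, ?_, by simp, ?_⟩⟩
    · simp_all
    · exact le_mul_of_one_le_left (norm_nonneg _) hc.le
  | @insert v s _ ih =>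
    rw [Finset.coe_insert, span_insert, ← sup_assoc] at hKs
    by_cases hvK : v ∈ K
    · rw [sup_eq_left.2 ((span_singleton_le_iff_mem v K).2 hvK)] at hKs
      exact ih hK hKs hc
    have hc' : 1 < √c := by rw [Real.lt_sqrt zero_le_one]; simpa using hc
    obtain ⟨q, hvq, hq⟩ := exists_sub_mem_forall_norm_le_mul_norm_add_smul hK hvK hc'
    have hvK₁ : v ∈ K ⊔ span L {q} := by
      simpa using add_mem_sup hvq (mem_span_singleton_self q)
    have hK₁s : (K ⊔ span L {q}) ⊔ span L s = ⊤ := by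
      refine top_le_iff.1 (hKs ▸ sup_le_sup_right (sup_le le_sup_left ?_) _)
      exact (span_singleton_le_iff_mem v _).2 hvK₁
    obtain ⟨W, hW, hWf⟩ := ih (isClosed_sup_finiteDimensional _ _ hK) hK₁s hc'
    refine ⟨W ⊔ span L {q}, inferInstance, fun f => ?_⟩
    obtain ⟨k₁, hk₁, hfk₁, hnorm⟩ := hWf f
    obtain ⟨g, hg, _, hz, rfl⟩ := mem_sup.1 hk₁
    obtain ⟨a, rfl⟩ := mem_span_singleton.1 hz
    refine ⟨g, hg, ?_, ?_⟩
    · simpa [sub_add_eq_sub_sub] using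
        add_mem_sup hfk₁ (mem_span_singleton.2 ⟨a, rfl⟩ : a • q ∈ span L {q})
    · calc ‖g‖ ≤ √c * ‖g + a • q‖ := hq g hg a
        _ ≤ √c * (√c * ‖f‖) := by gcongr
        _ = c * ‖f‖ := by rw [← mul_assoc, Real.mul_self_sqrt (by linarith)]

lemma exists_finiteDimensional_sub_mem {K : Submodule L E} (hK : IsClosed (K : Set E))
    (F : Submodule L E) [FiniteDimensional L F] (hKF : K ⊔ F = ⊤) {c : ℝ} (hc : 1 < c) :
    ∃ W : Submodule L E, FiniteDimensional L W ∧
      ∀ f, ∃ k ∈ K, f - k ∈ W ∧ ‖k‖ ≤ c * ‖f‖ := by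
  obtain ⟨s, rfl⟩ := (fg_iff_finiteDimensional F).2 inferInstance
  exact exists_finiteDimensional_sub_mem_of_sup_span_eq_top hK s hKF hc

end NearComplement

section RowDecay

variable {I : Type*} {x : I → L} [IsUltrametricDist L] [CompleteSpace L]

lemma exists_finite_forall_norm_apply_le_of_finiteDimensional {V : Type*}
    [NormedAddCommGroup V] [NormedSpace L V] [FiniteDimensional L V] (S : V →ₗ[L] CSpace x)
    {δ : ℝ} (hδ : 0 < δ) :
    ∃ J : Set I, J.Finite ∧ ∀ v, ∀ i ∉ J, ‖S v i‖ ≤ δ * ‖v‖ * ‖x i‖ := by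
  set b := Module.finBasis L V
  set M := ‖b.equivFunL.toContinuousLinearMap‖
  have hcoord (v : V) (k) : ‖b.equivFun v k‖ ≤ M * ‖v‖ :=
    (norm_le_pi_norm _ k).trans (b.equivFunL.toContinuousLinearMap.le_opNorm v)
  set δ' := δ / (M + 1)
  have hMδ' : M * δ' ≤ δ := by
    rw [mul_div_assoc', div_le_iff₀ (by positivity)]
    nlinarith [norm_nonneg b.equivFunL.toContinuousLinearMap]
  refine ⟨⋃ k, {i | δ' * ‖x i‖ < ‖S (b k) i‖},
    Set.finite_iUnion fun k => (S (b k)).mem_cBall.2 δ' (by positivity), fun v i hi => ?_⟩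
  simp only [Set.mem_iUnion, Set.mem_ofPred_eq, not_exists, not_lt] at hi
  have hSv : S v = ∑ k, b.equivFun v k • S (b k) := by
    simp_rw [← map_smul, ← map_sum, b.sum_equivFun]
  rw [hSv, CSpace.coe_sum, Finset.sum_apply]
  refine IsUltrametricDist.norm_sum_le_of_forall_le_of_nonneg (by positivity) fun k _ => ?_
  calc ‖⇑(b.equivFun v k • S (b k)) i‖ ≤ (M * ‖v‖) * (δ' * ‖x i‖) := by
        rw [CSpace.coe_smul, Pi.smul_apply, norm_smul]
        exact mul_le_mul (hcoord v k) (hi k) (norm_nonneg _) (by positivity)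
    _ = (M * δ') * ‖v‖ * ‖x i‖ := by ring
    _ ≤ δ * ‖v‖ * ‖x i‖ := by gcongr

lemma exists_finite_forall_norm_apply_le (T : CSpace x →L[L] CSpace x)
    (hT : ∀ ε > 0, ∃ K F : Submodule L (CSpace x), FiniteDimensional L F ∧ K ⊔ F = ⊤ ∧
      ∀ k ∈ K, ‖T k‖ ≤ ε * ‖k‖)
    {δ : ℝ} (hδ : 0 < δ) :
    ∃ J : Set I, J.Finite ∧ ∀ f, ∀ i ∉ J, ‖T f i‖ ≤ δ * ‖f‖ * ‖x i‖ := by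
  obtain ⟨K, F, hF, hKF, hK⟩ := hT (δ / 2) (half_pos hδ)
  have hK' : ∀ k ∈ K.topologicalClosure, ‖T k‖ ≤ δ / 2 * ‖k‖ := fun k hk =>
    closure_minimal (t := {k | ‖T k‖ ≤ δ / 2 * ‖k‖}) hK
      (isClosed_le (by fun_prop) (by fun_prop)) (by rwa [← K.topologicalClosure_coe])
  obtain ⟨W, hW, hWf⟩ := exists_finiteDimensional_sub_mem K.isClosed_topologicalClosure F
    (top_le_iff.1 (hKF ▸ sup_le_sup_right K.le_topologicalClosure F)) one_lt_two
  obtain ⟨J, hJ, hJf⟩ := exists_finite_forall_norm_apply_le_of_finiteDimensional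
    ((T : CSpace x →ₗ[L] CSpace x).comp W.subtype) (div_pos hδ three_pos)
  refine ⟨J, hJ, fun f i hi => ?_⟩
  obtain ⟨k, hk, hfk, hkf⟩ := hWf f
  have hTk : ‖T k i‖ ≤ δ * ‖f‖ * ‖x i‖ :=
    calc ‖T k i‖ ≤ ‖T k‖ * ‖x i‖ := (T k).norm_apply_le i
      _ ≤ δ / 2 * (2 * ‖f‖) * ‖x i‖ := by gcongr; exact (hK' k hk).trans (by gcongr)
      _ = δ * ‖f‖ * ‖x i‖ := by ring
  have hTfk : ‖T (f - k) i‖ ≤ δ * ‖f‖ * ‖x i‖ :=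
    calc ‖T (f - k) i‖ ≤ δ / 3 * ‖f - k‖ * ‖x i‖ := hJf ⟨f - k, hfk⟩ i hi
      _ ≤ δ / 3 * (‖f‖ + 2 * ‖f‖) * ‖x i‖ := by
        gcongr; exact (norm_sub_le f k).trans (by gcongr)
      _ = δ * ‖f‖ * ‖x i‖ := by ring
  rw [show T f = T k + T (f - k) by rw [← map_add, add_sub_cancel], CSpace.coe_add, Pi.add_apply]
  exact (IsUltrametricDist.norm_add_le_max _ _).trans (max_le hTk hTfk)

end RowDecay

section Operator

variable {I : Type*} {x : I → L} {u : (I → L) → I → L}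

def IsLinearOn.toLinearMap (h : IsLinearOn u (cBall x)) : CSpace x →ₗ[L] I → L where
  toFun f := u f
  map_add' f g := h.1 f f.mem_cBall g g.mem_cBall
  map_smul' c f := h.2 c f f.mem_cBall

def IsLinearOn.toCLM (h : IsLinearOn u (cBall x)) (hmaps : ∀ f ∈ cBall x, u f ∈ cBall x)
    {C : ℝ} (hC : ∀ f ∈ cBall x, normB x (u f) ≤ C * normB x f) :
    CSpace x →L[L] CSpace x :=
  LinearMap.mkContinuous (h.toLinearMap.codRestrict (cSubmodule x) fun f => hmaps f f.mem_cBall)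
    C fun f => hC f f.mem_cBall

lemma CompletelyContinuousOn.exists_sup_eq_top_forall_norm_le (hcc : CompletelyContinuousOn u x)
    (T : CSpace x →L[L] CSpace x) (hT : ∀ f, ⇑(T f) = u f) {ε : ℝ} (hε : 0 < ε) :
    ∃ K F : Submodule L (CSpace x), FiniteDimensional L F ∧ K ⊔ F = ⊤ ∧
      ∀ k ∈ K, ‖T k‖ ≤ ε * ‖k‖ := by
  -- `u' f` need not lie in `𝐬(I,x)`, outside of which `normB x` is a junk value, so the bound
  -- `normB x (u f - u' f) ≤ ε * normB x f` only carries information on the kernel of `u'`.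
  obtain ⟨u', hu', -, ⟨G, hG, hu'G⟩, happrox⟩ := hcc ε hε
  set A := hu'.toLinearMap
  obtain ⟨F, hKF⟩ := (LinearMap.ker A).exists_isCompl
  have : FiniteDimensional L (LinearMap.range A) :=
    Submodule.finiteDimensional_of_le (LinearMap.range_le_iff_comap.2 <| top_le_iff.1
      fun f _ => hu'G f f.mem_cBall)
  refine ⟨LinearMap.ker A, F, (A.quotKerEquivRange.symm.trans
    ((LinearMap.ker A).quotientEquivOfIsCompl F hKF)).finiteDimensional, hKF.sup_eq_top,
    fun k hk => ?_⟩
  have hk : u' k = 0 := hk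
  simpa [CSpace.norm_def, hT, hk] using happrox k k.mem_cBall

end Operator

section Fredholm

variable {ι : Type*}

lemma fredholmTerm_conj (nm : ι → ι → L) {d : ι → L} (hd : ∀ i, d i ≠ 0)
    (S : Finset ι) :
    fredholmTerm (fun i j => (d i)⁻¹ * nm i j * d j) S = fredholmTerm nm S := by
  refine Finset.sum_congr rfl fun σ _ => congrArg _ ?_
  rw [Finset.prod_mul_distrib, Finset.prod_mul_distrib, Equiv.prod_comp σ fun i => d i.1,
    mul_right_comm, Finset.prod_inv_distrib, inv_mul_cancel₀, one_mul]
  exact Finset.prod_ne_zero_iff.2 fun i _ => hd i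

variable [IsUltrametricDist L]

lemma norm_fredholmTerm_le {nm : ι → ι → L} {C δ : ℝ} (hC : ∀ i j, ‖nm i j‖ ≤ C)
    {S : Finset ι} {i₀ : ι} (hi₀ : i₀ ∈ S) (hδ : ∀ j, ‖nm i₀ j‖ ≤ δ) :
    ‖fredholmTerm nm S‖ ≤ δ * C ^ (S.card - 1) := by
  have hC0 : 0 ≤ C := (norm_nonneg _).trans (hC i₀ i₀)
  have hδ0 : 0 ≤ δ := (norm_nonneg _).trans (hδ i₀)
  refine IsUltrametricDist.norm_sum_le_of_forall_le_of_nonneg (by positivity) fun σ _ => ?_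
  rw [norm_mul, norm_prod, ← Finset.mul_prod_erase _ _ (Finset.mem_univ ⟨i₀, hi₀⟩)]
  have hsign : ‖((Equiv.Perm.sign σ : ℤ) : L)‖ = 1 := by
    rcases Int.units_eq_one_or (Equiv.Perm.sign σ) with h | h <;> simp [h]
  rw [hsign, one_mul]
  gcongr
  · exact hδ _
  · calc _ ≤ ∏ _ ∈ Finset.univ.erase (⟨i₀, hi₀⟩ : S), C :=
          Finset.prod_le_prod (fun _ _ => norm_nonneg _) fun _ _ => hC _ _
      _ = C ^ (S.card - 1) := by simp [Finset.card_erase_of_mem]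

lemma summable_fredholmTerm [CompleteSpace L] {nm : ι → ι → L} {C : ℝ}
    (hC : ∀ i j, ‖nm i j‖ ≤ C)
    (hrow : ∀ δ > 0, ∃ J : Set ι, J.Finite ∧ ∀ i ∉ J, ∀ j, ‖nm i j‖ ≤ δ)
    (n : ℕ) :
    Summable fun S : {S : Finset ι // S.card = n} => fredholmTerm nm S.1 := by
  refine NonarchimedeanAddGroup.summable_of_tendsto_cofinite_zero
    (Metric.tendsto_nhds.2 fun ε hε => ?_)
  have hC₀ : ∀ i j, ‖nm i j‖ ≤ max C 0 := fun i j => (hC i j).trans (le_max_left _ _)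
  set δ := ε / (max C 0 ^ (n - 1) + 1)
  obtain ⟨J, hJ, hJrow⟩ := hrow δ (by positivity)
  refine ((hJ.finite_subsets.preimage Finset.coe_injective.injOn).preimage
    Subtype.val_injective.injOn).subset fun S hS => ?_
  by_contra hSJ
  obtain ⟨i₀, hi₀S, hi₀J⟩ := Set.not_subset.1 hSJ
  refine hS (show dist _ 0 < ε from ?_)
  rw [dist_zero_right]
  calc ‖fredholmTerm nm S.1‖ ≤ δ * max C 0 ^ (S.1.card - 1) :=
        norm_fredholmTerm_le hC₀ hi₀S (hJrow i₀ hi₀J)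
    _ = δ * max C 0 ^ (n - 1) := by rw [S.2]
    _ < ε := by
      rw [div_mul_eq_mul_div, div_lt_iff₀ (by positivity)]
      nlinarith [pow_nonneg (le_max_right C 0) (n - 1)]

end Fredholm

section Matrix

variable {I : Type*} {x : I → L} {u : (I → L) → I → L}

lemma single_mem_cBall (x : I → L) (j : I) : (fun k => if k = j then x j else 0) ∈ cBall x := by
  refine ⟨⟨1, fun i => ?_⟩, fun ε hε => (Set.finite_singleton j).subset fun i hi => ?_⟩
  · dsimp only
    split_ifs with h <;> simp [h]
  · by_contra h
    simp only [Set.mem_singleton_iff] at h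
    simp only [Set.mem_ofPred_eq, h, if_false, norm_zero] at hi
    exact (mul_nonneg hε.le (norm_nonneg _)).not_gt hi

def CSpace.single (x : I → L) (j : I) : CSpace x :=
  (⟨_, single_mem_cBall x j⟩ : cSubmodule x)

lemma CSpace.norm_single_le (j : I) : ‖single x j‖ ≤ 1 :=
  norm_le_of_forall zero_le_one fun i => by
    change ‖if i = j then x j else 0‖ ≤ 1 * ‖x i‖
    split_ifs with h <;> simp [h]

lemma matrixOf_eq_apply (T : CSpace x →L[L] CSpace x) (hT : ∀ f, ⇑(T f) = u f) (i j : I) :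
    matrixOf u x i j = T (CSpace.single x j) i / x i := by
  rw [hT]; rfl

lemma norm_matrixOf_le (hx0 : ∀ i, x i ≠ 0) (T : CSpace x →L[L] CSpace x)
    (hT : ∀ f, ⇑(T f) = u f) (i j : I) : ‖matrixOf u x i j‖ ≤ ‖T‖ := by
  rw [matrixOf_eq_apply T hT, norm_div, div_le_iff₀ (norm_pos_iff.2 (hx0 i))]
  refine (CSpace.norm_apply_le _ i).trans ?_
  gcongr
  simpa using T.le_opNorm_of_le (CSpace.norm_single_le j)

lemma exists_finite_forall_norm_matrixOf_le [IsUltrametricDist L] [CompleteSpace L]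
    (hx0 : ∀ i, x i ≠ 0) (hcc : CompletelyContinuousOn u x) (T : CSpace x →L[L] CSpace x)
    (hT : ∀ f, ⇑(T f) = u f) {δ : ℝ} (hδ : 0 < δ) :
    ∃ J : Set I, J.Finite ∧ ∀ i ∉ J, ∀ j, ‖matrixOf u x i j‖ ≤ δ := by
  obtain ⟨J, hJ, hJf⟩ := exists_finite_forall_norm_apply_le T
    (fun ε hε => hcc.exists_sup_eq_top_forall_norm_le T hT hε) hδ
  refine ⟨J, hJ, fun i hi j => ?_⟩
  rw [matrixOf_eq_apply T hT, norm_div, div_le_iff₀ (norm_pos_iff.2 (hx0 i))]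
  calc _ ≤ δ * ‖CSpace.single x j‖ * ‖x i‖ := hJf _ i hi
    _ ≤ δ * 1 * ‖x i‖ := by gcongr; exact CSpace.norm_single_le j
    _ = δ * ‖x i‖ := by ring

lemma matrixOf_eq_conj (hx0 : ∀ i, x i ≠ 0) (hlin : IsLinearOn u (cBall x)) (y : I → L)
    (i j : I) : matrixOf u y i j = (y i / x i)⁻¹ * matrixOf u x i j * (y j / x j) := by
  have hyj : (fun k => if k = j then y j else 0) =
      (y j / x j) • fun k => if k = j then x j else 0 := by
    ext k; split_ifs with h <;> simp [h, hx0 j]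
  simp only [matrixOf]
  rw [hyj, hlin.2 _ _ (single_mem_cBall x j), Pi.smul_apply, smul_eq_mul]
  have hxi := hx0 i
  rcases eq_or_ne (y i) 0 with hyi | hyi
  · simp [hyi]
  · field_simp

end Matrix

theorem statement_11_general {L : Type*} [NontriviallyNormedField L] [CompleteSpace L]
    [IsUltrametricDist L] {I : Type*}
    (x y : I → L) (hx0 : ∀ i, x i ≠ 0) (hy0 : ∀ i, y i ≠ 0)
    (u : (I → L) → I → L)
    (hlin : IsLinearOn u (cBall x))
    (hmaps : ∀ f ∈ cBall x, u f ∈ cBall x)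
    (hcont : ∃ C : ℝ, ∀ f ∈ cBall x, normB x (u f) ≤ C * normB x f)
    (hcc : CompletelyContinuousOn u x) :
    (∀ n : ℕ,
      Summable (fun S : {S : Finset I // S.card = n} => fredholmTerm (matrixOf u y) S.1)) ∧
    ∀ n : ℕ, detCoeff (matrixOf u y) n = detCoeff (matrixOf u x) n := by
  obtain ⟨C, hC⟩ := hcont
  set T := hlin.toCLM hmaps hC
  have hT : ∀ f, ⇑(T f) = u f := fun f => rfl
  have hterm (S : Finset I) : fredholmTerm (matrixOf u y) S = fredholmTerm (matrixOf u x) S := by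
    rw [funext₂ (matrixOf_eq_conj hx0 hlin y),
      fredholmTerm_conj _ fun i => div_ne_zero (hy0 i) (hx0 i)]
  refine ⟨fun n => ?_, fun n => by simp only [detCoeff, hterm]⟩
  simp_rw [hterm]
  exact summable_fredholmTerm (norm_matrixOf_le hx0 T hT)
    (fun δ hδ => exists_finite_forall_norm_matrixOf_le hx0 hcc T hT hδ) n

/-- Let `x > y` (entries nonzero), and let `u` be a continuous
`L`-linear completely continuous operator on `𝐜(I,x)` with `u(𝐬(I,y)) ⊆ 𝐬(I,y)`.
Then the Fredholm determinant `det(1 - su | B(I,y))` exists (all the sums defining its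
coefficients converge) and equals `det(1 - su | B(I,x))` as a formal power series. -/
theorem statement_11 {L : Type*} [NontriviallyNormedField L] [CompleteSpace L]
    [IsUltrametricDist L] {I : Type*} [Countable I] [Infinite I]
    (x y : I → L) (hx0 : ∀ i, x i ≠ 0) (hy0 : ∀ i, y i ≠ 0)
    (hxc : cZero x) (hyc : cZero y) (hxy : gtRel x y)
    (u : (I → L) → I → L)
    (hlin : IsLinearOn u (cBall x))
    (hmaps : ∀ f ∈ cBall x, u f ∈ cBall x)
    (hcont : ∃ C : ℝ, ∀ f ∈ cBall x, normB x (u f) ≤ C * normB x f)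
    (hcc : CompletelyContinuousOn u x)
    (hsy : ∀ f ∈ sBall y, u f ∈ sBall y) :
    (∀ n : ℕ,
      Summable (fun S : {S : Finset I // S.card = n} => fredholmTerm (matrixOf u y) S.1)) ∧
    ∀ n : ℕ, detCoeff (matrixOf u y) n = detCoeff (matrixOf u x) n :=
  statement_11_general x y hx0 hy0 u hlin hmaps hcont hcc

end FredholmStmt
end
end

section
/- Let b ∈ 𝐜(I) have all entries nonzero, and let v be a continuous E-linear operator on 𝐬(I,b) that is ν^{−1}-semilinear, i.e. v(c^ν · z) = c · v(z) for all c ∈ L and z ∈ 𝐬(I,b), and tight. Then: (1) col_{(i,j)}(v) is independent of j, equal to col_{(i,1)}(v) for every 1 ≤ j ≤ a; and (2) the Fredholm determinant det(1 − sv | B(I_E,b)) = ∑ c_n s^n is defined, and for every n ≥ 0 the valuation v_p(c_n) is at least the sum of the n smallest elements (counted with multiplicity) of the multiset consisting of the numbers col_{(i,1)}(v), i ∈ I, each taken with multiplicity a. -/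
open Filter Topology
open scoped Classical

noncomputable section

/-!
The valuation `vpE` turns products into sums and, `L` being ultrametric, bounds a sum from below
by the least valuation of its terms. Hence the term `∑_σ sgn σ ∏_{w ∈ S} N_{w,σ w}` of the
Fredholm determinant has valuation at least `∑_{w ∈ S} col_w`, a sum that is smallest for the `n`
smallest columns; by tightness these terms tend to `0`, so the series defining `cₙ` converge.

Since `ζ` is an integral basis, `col_w` is also the least valuation of the coordinates of
`v(ζⱼ bᵢ eᵢ)` with respect to the `bₖ eₖ`. Semilinearity gives
`v(ζⱼ bᵢ eᵢ) = ν⁻¹(ζⱼ) v(bᵢ eᵢ)`, and `ν` is an isometry: it is bounded on the finite `E`-basis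
`ζ`, hence norm-preserving by the power trick. So `col_{(i,j)} = col_{(i,1)}`.
-/

section Isometry

variable {K : Type*} [NormedField K]

theorem norm_map_le_of_norm_map_le_mul {F : Type*} [FunLike F K K] [MonoidHomClass F K K]
    (τ : F) {C : ℝ} (h : ∀ x, ‖τ x‖ ≤ C * ‖x‖) (x : K) : ‖τ x‖ ≤ ‖x‖ := by
  rcases eq_or_ne x 0 with rfl | hx
  · simpa using h 0
  by_contra! hlt
  have hx' : 0 < ‖x‖ := norm_pos_iff.2 hx
  obtain ⟨n, hn⟩ := pow_unbounded_of_one_lt C ((one_lt_div hx').2 hlt)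
  refine hn.not_ge ?_
  rw [div_pow, div_le_iff₀ (pow_pos hx' n), ← norm_pow, ← norm_pow, ← map_pow]
  exact h _

variable [IsUltrametricDist K] {κ : Type*} [Fintype κ] {E : Subfield K} {ζ : κ → K}

theorem exists_norm_map_le_mul
    (hbasis : ∀ z : K, ∃ e : κ → K, (∀ j, e j ∈ E) ∧ z = ∑ j, e j * ζ j)
    (hint : ∀ e : κ → K, (∀ j, e j ∈ E) → ∀ j, ‖e j‖ ≤ ‖∑ k, e k * ζ k‖)
    {F : Type*} [FunLike F K K] [RingHomClass F K K] (τ : F) (hτ : ∀ e ∈ E, τ e = e) :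
    ∃ C, ∀ x, ‖τ x‖ ≤ C * ‖x‖ := by
  refine ⟨∑ j, ‖τ (ζ j)‖, fun x => ?_⟩
  obtain ⟨e, he, rfl⟩ := hbasis x
  rw [map_sum]
  refine IsUltrametricDist.norm_sum_le_of_forall_le_of_nonneg (by positivity) fun j _ => ?_
  rw [map_mul, hτ _ (he j), norm_mul, mul_comm]
  exact mul_le_mul
    (Finset.single_le_sum (f := fun k => ‖τ (ζ k)‖) (fun k _ => norm_nonneg _) (Finset.mem_univ j))
    (hint e he j) (norm_nonneg _) (by positivity)

theorem norm_map_eq_of_forall_mem_fixed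
    (hbasis : ∀ z : K, ∃ e : κ → K, (∀ j, e j ∈ E) ∧ z = ∑ j, e j * ζ j)
    (hint : ∀ e : κ → K, (∀ j, e j ∈ E) → ∀ j, ‖e j‖ ≤ ‖∑ k, e k * ζ k‖)
    (τ : K ≃+* K) (hτ : ∀ e ∈ E, τ e = e) (x : K) : ‖τ x‖ = ‖x‖ := by
  have hτ' : ∀ e ∈ E, τ.symm e = e := fun e he => τ.symm_apply_eq.2 (hτ e he).symm
  obtain ⟨C, hC⟩ := exists_norm_map_le_mul hbasis hint τ hτ
  obtain ⟨C', hC'⟩ := exists_norm_map_le_mul hbasis hint τ.symm hτ'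
  refine le_antisymm (norm_map_le_of_norm_map_le_mul τ hC x) ?_
  simpa using norm_map_le_of_norm_map_le_mul τ.symm hC' (τ x)

end Isometry

section Exchange

variable {M ι : Type*} [AddCommMonoid M] [PartialOrder M] [IsOrderedAddMonoid M]

theorem Finset.sum_le_sum_of_card_eq_of_le_outside {f : ι → M} {S T : Finset ι}
    (hcard : S.card = T.card) (hT : ∀ w ∈ T, ∀ w' ∉ T, f w ≤ f w') :
    ∑ w ∈ T, f w ≤ ∑ w ∈ S, f w := by
  classical
  let e := Finset.equivOfCardEq (Finset.card_sdiff_comm hcard.symm)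
  have hdiff : ∑ w ∈ T \ S, f w ≤ ∑ w ∈ S \ T, f w := by
    rw [← Finset.sum_coe_sort (T \ S), ← Finset.sum_coe_sort (S \ T), ← e.sum_comp]
    exact Finset.sum_le_sum fun x _ =>
      hT _ (Finset.mem_sdiff.1 x.2).1 _ (Finset.mem_sdiff.1 (e x).2).2
  rw [← Finset.sum_inter_add_sum_sdiff T S, ← Finset.sum_inter_add_sum_sdiff S T,
    Finset.inter_comm]
  exact add_le_add_right hdiff _

end Exchange

section TightFamilies

variable {ι : Type*} {f : ι → EReal}

theorem EReal.exists_coe_le_of_finite_setOf_lt (hbot : ∀ w, f w ≠ ⊥)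
    (hfin : {w | f w < 0}.Finite) : ∃ b : ℝ, ∀ w, (b : EReal) ≤ f w := by
  choose g hg using fun w => EReal.lt_iff_exists_real_btwn.1 (bot_lt_iff_ne_bot.2 (hbot w))
  obtain ⟨m, hm⟩ := (hfin.image g).bddBelow
  refine ⟨min m 0, fun w => ?_⟩
  by_cases hw : f w < 0
  · exact (EReal.coe_le_coe_iff.2 ((min_le_left _ _).trans (hm ⟨w, hw, rfl⟩))).trans (hg w).2.le
  · exact (EReal.coe_le_coe_iff.2 (min_le_right _ _)).trans (not_lt.1 hw)

theorem EReal.finite_setOf_sum_lt (hbot : ∀ w, f w ≠ ⊥)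
    (htight : ∀ c : ℝ, {w | f w < c}.Finite) (n : ℕ) (c : ℝ) :
    {S : {S : Finset ι // S.card = n} | ∑ w ∈ S.1, f w < c}.Finite := by
  classical
  obtain ⟨b, hb⟩ := EReal.exists_coe_le_of_finite_setOf_lt hbot (htight 0)
  set c' := c - (n - 1 : ℕ) • b
  refine ((htight c').finite_subsets.preimage
    (Finset.coe_injective.comp Subtype.val_injective).injOn).subset fun S hS w hw => ?_
  replace hS : ∑ x ∈ S.1, f x < c := hS
  by_contra hw'
  refine (not_lt.2 ?_) hS
  have hrest : (n - 1 : ℕ) • (b : EReal) ≤ ∑ x ∈ S.1.erase w, f x := by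
    simpa [Finset.card_erase_of_mem hw, S.2] using
      Finset.card_nsmul_le_sum (S.1.erase w) f b fun x _ => hb x
  calc (c : EReal) = c' + (n - 1 : ℕ) • (b : EReal) := by
        rw [← EReal.coe_nsmul, ← EReal.coe_add]
        exact congrArg _ (_root_.sub_add_cancel c _).symm
    _ ≤ f w + ∑ x ∈ S.1.erase w, f x := add_le_add (not_lt.1 hw') hrest
    _ = ∑ x ∈ S.1, f x := Finset.add_sum_erase _ _ hw

end TightFamilies

namespace FredholmStmt

variable {L : Type*} [NontriviallyNormedField L]

section Valuation

variable {p : ℕ}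

theorem vpE_congr_norm {x y : L} (h : ‖x‖ = ‖y‖) : vpE p x = vpE p y := by
  simp only [vpE, ← norm_eq_zero (a := x), ← norm_eq_zero (a := y), h]

theorem vpE_zero : vpE p (0 : L) = ⊤ := if_pos rfl

theorem vpE_ne_bot (z : L) : vpE p z ≠ ⊥ := by
  unfold vpE
  split_ifs <;> simp

theorem vpE_mul (x y : L) : vpE p (x * y) = vpE p x + vpE p y := by
  by_cases hx : x = 0
  · rw [hx, zero_mul, vpE_zero, EReal.top_add_of_ne_bot (vpE_ne_bot y)]
  by_cases hy : y = 0
  · rw [hy, mul_zero, vpE_zero, EReal.add_top_of_ne_bot (vpE_ne_bot x)]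
  simp only [vpE, mul_ne_zero hx hy, hx, hy, if_false, norm_mul,
    Real.log_mul (norm_ne_zero_iff.2 hx) (norm_ne_zero_iff.2 hy), add_div, neg_add,
    EReal.coe_add]

theorem vpE_mul_of_norm_eq_one {u : L} (hu : ‖u‖ = 1) (x : L) : vpE p (u * x) = vpE p x :=
  vpE_congr_norm (by rw [norm_mul, hu, one_mul])

theorem vpE_prod {ι : Type*} (s : Finset ι) (f : ι → L) :
    vpE p (∏ i ∈ s, f i) = ∑ i ∈ s, vpE p (f i) := by
  induction s using Finset.cons_induction with
  | empty => simp [vpE]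
  | cons i s hi ih => rw [Finset.prod_cons, Finset.sum_cons, vpE_mul, ih]

theorem coe_le_vpE_iff (hp : 1 < p) {r : ℝ} {z : L} :
    (r : EReal) ≤ vpE p z ↔ ‖z‖ ≤ (p : ℝ) ^ (-r) := by
  rcases eq_or_ne z 0 with rfl | hz
  · simpa [vpE] using by positivity
  rw [vpE, if_neg hz, EReal.coe_le_coe_iff, le_neg, Real.log_div_log,
    Real.logb_le_iff_le_rpow (by exact_mod_cast hp) (norm_pos_iff.2 hz)]

theorem le_vpE_iff (hp : 1 < p) {c : EReal} {z : L} :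
    c ≤ vpE p z ↔ ∀ r : ℝ, (r : EReal) < c → ‖z‖ ≤ (p : ℝ) ^ (-r) := by
  simp only [← coe_le_vpE_iff hp]
  exact EReal.ge_of_forall_gt_iff_ge.symm

theorem vpE_le_vpE_of_norm_le (hp : 1 < p) {x y : L} (h : ‖x‖ ≤ ‖y‖) : vpE p y ≤ vpE p x :=
  (le_vpE_iff hp).2 fun r hr => h.trans ((le_vpE_iff hp).1 le_rfl r hr)

theorem exists_coe_le_vpE_of_norm_le (hp : 1 < p) (C : ℝ) :
    ∃ r : ℝ, ∀ z : L, ‖z‖ ≤ C → (r : EReal) ≤ vpE p z := by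
  refine ⟨-Real.logb p (max C 1), fun z hz => (coe_le_vpE_iff hp).2 ?_⟩
  rw [neg_neg, Real.rpow_logb (by positivity) (by exact_mod_cast hp.ne') (by positivity)]
  exact hz.trans (le_max_left _ _)

theorem tendsto_zero_of_forall_coe_le_vpE (hp : 1 < p) {α : Type*} {l : Filter α}
    {f : α → L} (h : ∀ r : ℝ, ∀ᶠ x in l, (r : EReal) ≤ vpE p (f x)) : Tendsto f l (𝓝 0) := by
  refine Metric.tendsto_nhds.2 fun ε hε => ?_
  filter_upwards [h (-Real.logb p (ε / 2))] with x hx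
  rw [coe_le_vpE_iff hp, neg_neg,
    Real.rpow_logb (by positivity) (by exact_mod_cast hp.ne') (by positivity)] at hx
  rw [dist_zero_right]
  linarith

variable [IsUltrametricDist L]

theorem le_vpE_sum (hp : 1 < p) {ι : Type*} {s : Finset ι} {f : ι → L} {c : EReal}
    (h : ∀ i ∈ s, c ≤ vpE p (f i)) : c ≤ vpE p (∑ i ∈ s, f i) :=
  (le_vpE_iff hp).2 fun r hr => IsUltrametricDist.norm_sum_le_of_forall_le_of_nonneg
    (by positivity) fun i hi => (le_vpE_iff hp).1 (h i hi) r hr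

theorem le_vpE_tsum (hp : 1 < p) {ι : Type*} {f : ι → L} {c : EReal}
    (h : ∀ i, c ≤ vpE p (f i)) : c ≤ vpE p (∑' i, f i) :=
  (le_vpE_iff hp).2 fun r hr => IsUltrametricDist.norm_tsum_le_of_forall_le_of_nonneg
    (by positivity) fun i => (le_vpE_iff hp).1 (h i) r hr

end Valuation

section Fredholm

variable {p : ℕ} [IsUltrametricDist L] {ι : Type*}

theorem sum_colOf_le_vpE_fredholmTerm (hp : 1 < p) (N : ι → ι → L) (S : Finset ι) :
    ∑ w ∈ S, colOf p N w ≤ vpE p (fredholmTerm N S) := by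
  refine le_vpE_sum hp fun σ _ => ?_
  have hsign : ‖((Equiv.Perm.sign σ : ℤ) : L)‖ = 1 := by
    rcases Int.units_eq_one_or (Equiv.Perm.sign σ) with h | h <;> simp [h]
  rw [vpE_mul_of_norm_eq_one hsign, vpE_prod, ← Finset.sum_coe_sort S,
    ← Equiv.sum_comp σ (fun w => colOf p N w.1)]
  exact Finset.sum_le_sum fun w _ => iInf_le (fun w' => vpE p (N w' _)) w.1

theorem summable_fredholmTerm_s12 [CompleteSpace L] (hp : 1 < p) {N : ι → ι → L}
    (hbot : ∀ w, colOf p N w ≠ ⊥) (htight : ∀ C : ℝ, {w | colOf p N w < C}.Finite) (n : ℕ) :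
    Summable fun S : {S : Finset ι // S.card = n} => fredholmTerm N S.1 := by
  refine NonarchimedeanAddGroup.summable_of_tendsto_cofinite_zero
    (tendsto_zero_of_forall_coe_le_vpE hp fun c => ?_)
  rw [eventually_cofinite]
  exact (EReal.finite_setOf_sum_lt hbot htight n c).subset fun S hS =>
    (sum_colOf_le_vpE_fredholmTerm hp N S.1).trans_lt (not_le.1 hS)

theorem le_vpE_detCoeff (hp : 1 < p) {N : ι → ι → L} {n : ℕ} {c : EReal}
    (h : ∀ S : Finset ι, S.card = n → c ≤ vpE p (fredholmTerm N S)) :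
    c ≤ vpE p (detCoeff N n) := by
  rw [detCoeff, vpE_mul_of_norm_eq_one (by rw [norm_pow, norm_neg, norm_one, one_pow])]
  exact le_vpE_tsum hp fun S => h S.1 S.2

end Fredholm

section IntegralBasis

variable {p : ℕ} {κ : Type*} [Fintype κ] (E : Subfield L) (ζ : κ → L)

theorem vpE_sum_mul_eq_iInf [IsUltrametricDist L] (hp : 1 < p) (hζ : ∀ j, ‖ζ j‖ ≤ 1)
    (hint : ∀ e : κ → L, (∀ j, e j ∈ E) → ∀ j, ‖e j‖ ≤ ‖∑ k, e k * ζ k‖)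
    {e : κ → L} (he : ∀ j, e j ∈ E) : vpE p (∑ j, e j * ζ j) = ⨅ j, vpE p (e j) := by
  refine le_antisymm (le_iInf fun j => vpE_le_vpE_of_norm_le hp (hint e he j))
    (le_vpE_sum hp fun j _ => (iInf_le _ j).trans (vpE_le_vpE_of_norm_le hp ?_))
  rw [norm_mul]
  exact mul_le_of_le_one_right (norm_nonneg _) (hζ j)

theorem norm_eq_one_of_integral_basis (hζ : ∀ j, ‖ζ j‖ ≤ 1)
    (hint : ∀ e : κ → L, (∀ j, e j ∈ E) → ∀ j, ‖e j‖ ≤ ‖∑ k, e k * ζ k‖) (j : κ) :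
    ‖ζ j‖ = 1 := by
  classical
  refine le_antisymm (hζ j) ?_
  have hsingle : ∀ k, (Pi.single j 1 : κ → L) k ∈ E := fun k => by
    by_cases hk : k = j <;> simp [hk, E.one_mem, E.zero_mem]
  simpa [Pi.single_apply] using hint (Pi.single j 1) hsingle j

theorem colOf_eq_iInf_vpE [IsUltrametricDist L] (hp : 1 < p) (hζ : ∀ j, ‖ζ j‖ ≤ 1)
    (hint : ∀ e : κ → L, (∀ j, e j ∈ E) → ∀ j, ‖e j‖ ≤ ‖∑ k, e k * ζ k‖)
    {I : Type*} {N : I × κ → I × κ → L} (hNE : ∀ w w', N w w' ∈ E) (w : I × κ) {y : I → L}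
    (hy : ∀ i, y i = ∑ j, N (i, j) w * ζ j) : colOf p N w = ⨅ i, vpE p (y i) := by
  simp only [colOf, iInf_prod, hy, vpE_sum_mul_eq_iInf E ζ hp hζ hint fun j => hNE _ w]

end IntegralBasis

/-- The vector `ζⱼ bᵢ eᵢ` of the basis `B(I_E, b)`, indexed by `w = (i, j)`. -/
def basisVec {I : Type*} {a : ℕ} (ζ : Fin a → L) (b : I → L) (w : I × Fin a) : I → L :=
  fun k => if k = w.1 then ζ w.2 * b w.1 else 0

theorem basisVec_mem_sBall {I : Type*} {a : ℕ} {ζ : Fin a → L} (hζ : ∀ j, ‖ζ j‖ ≤ 1)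
    (b : I → L) (w : I × Fin a) : basisVec ζ b w ∈ sBall b := by
  refine ⟨1, fun i => ?_⟩
  simp only [basisVec]
  split_ifs with h
  · rw [h, norm_mul]
    exact mul_le_mul_of_nonneg_right (hζ w.2) (norm_nonneg _)
  · simp

theorem apply_basisVec_eq_symm_mul {I : Type*} {a : ℕ} {ζ : Fin a → L} (ha : 0 < a)
    (hζ0 : ζ ⟨0, ha⟩ = 1) (hζ : ∀ j, ‖ζ j‖ ≤ 1) {b : I → L} {ν : L ≃+* L}
    {v : (I → L) → I → L}
    (hsemi : ∀ (c : L), ∀ z ∈ sBall b, v (fun i => ν c * z i) = fun i => c * v z i)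
    (i : I) (j : Fin a) :
    v (basisVec ζ b (i, j)) = fun k => ν.symm (ζ j) * v (basisVec ζ b (i, ⟨0, ha⟩)) k := by
  rw [← hsemi _ _ (basisVec_mem_sBall hζ b _)]
  congr 1
  funext k
  by_cases hk : k = i <;> simp [basisVec, hk, hζ0]

theorem statement_12_general {p : ℕ} (hp : p.Prime)
    {L : Type*} [NontriviallyNormedField L] [CompleteSpace L] [IsUltrametricDist L]
    {I : Type*}
    (E : Subfield L) (a : ℕ) (ha : 0 < a)
    (ζ : Fin a → L) (hζ0 : ζ ⟨0, ha⟩ = 1) (hζint : ∀ j, ‖ζ j‖ ≤ 1)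
    (hbasis : ∀ z : L, ∃! e : Fin a → L, (∀ j, e j ∈ E) ∧ z = ∑ j : Fin a, e j * ζ j)
    (hintbasis : ∀ e : Fin a → L, (∀ j, e j ∈ E) →
      ∀ j, ‖e j‖ ≤ ‖∑ k : Fin a, e k * ζ k‖)
    (ν : L ≃+* L) (hν : ∀ e ∈ E, ν e = e)
    (b : I → L) (hb0 : ∀ i, b i ≠ 0)
    (v : (I → L) → I → L)
    (hmaps : ∀ z ∈ sBall b, v z ∈ sBall b)
    (hsemi : ∀ (c : L), ∀ z ∈ sBall b, v (fun i => ν c * z i) = fun i => c * v z i)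
    (N : I × Fin a → I × Fin a → L) (hNE : ∀ w w', N w w' ∈ E)
    (hN : ∀ (i' : I) (j' : Fin a) (i : I),
      v (fun k => if k = i' then ζ j' * b i' else 0) i
        = (∑ j : Fin a, N (i, j) (i', j') * ζ j) * b i)
    (htight : ∀ C : ℝ, {w : I × Fin a | colOf p N w < (C : EReal)}.Finite) :
    (∀ (i : I) (j : Fin a), colOf p N (i, j) = colOf p N (i, ⟨0, ha⟩)) ∧
    (∀ n : ℕ, Summable
      (fun S : {S : Finset (I × Fin a) // S.card = n} => fredholmTerm N S.1)) ∧
    ∀ (n : ℕ) (T : Finset (I × Fin a)), T.card = n →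
      (∀ w ∈ T, ∀ w' ∉ T, colOf p N w ≤ colOf p N w') →
      (∑ w ∈ T, colOf p N w) ≤ vpE p (detCoeff N n) := by
  have hp1 : 1 < p := hp.one_lt
  have hcol : ∀ w, colOf p N w = ⨅ i, vpE p (v (basisVec ζ b w) i / b i) := fun w =>
    colOf_eq_iInf_vpE E ζ hp1 hζint hintbasis hNE w fun i => by
      rw [div_eq_iff (hb0 i)]
      exact hN w.1 w.2 i
  have hbot : ∀ w, colOf p N w ≠ ⊥ := by
    intro w
    obtain ⟨C, hC⟩ := hmaps _ (basisVec_mem_sBall hζint b w)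
    obtain ⟨r, hr⟩ := exists_coe_le_vpE_of_norm_le (L := L) hp1 C
    refine ne_bot_of_le_ne_bot (EReal.coe_ne_bot r) ((hcol w).symm ▸ le_iInf fun i => hr _ ?_)
    rw [norm_div, div_le_iff₀ (norm_pos_iff.2 (hb0 i))]
    exact hC i
  refine ⟨fun i j => ?_, summable_fredholmTerm_s12 hp1 hbot htight, fun n T hT hmin => ?_⟩
  · have hνζ : ‖ν.symm (ζ j)‖ = 1 := by
      rw [← norm_map_eq_of_forall_mem_fixed (fun z => (hbasis z).exists) hintbasis ν hν,
        ν.apply_symm_apply]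
      exact norm_eq_one_of_integral_basis E ζ hζint hintbasis j
    rw [hcol, hcol, apply_basisVec_eq_symm_mul ha hζ0 hζint hsemi]
    congr 1
    funext k
    rw [mul_div_assoc, vpE_mul_of_norm_eq_one hνζ]
  · exact le_vpE_detCoeff hp1 fun S hS =>
      (Finset.sum_le_sum_of_card_eq_of_le_outside (hS.trans hT.symm) hmin).trans
        (sum_colOf_le_vpE_fredholmTerm hp1 N S)

/-- Let `v` be a continuous `E`-linear, `ν⁻¹`-semilinear, tight
operator on `𝐬(I,b)`, with matrix `N` (entries in `E`) in the integral `E`-basis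
`B(I_E,b) = {ζⱼ bᵢ eᵢ}`. Then (1) `col_{(i,j)}(v)` is independent of `j`; and
(2) the Fredholm determinant `det(1 - sv | B(I_E,b)) = ∑ cₙ sⁿ` is defined, and
`v_p(cₙ)` is at least the sum of the `n` smallest elements of the multiset of the
column valuations `{col_w(v)}_{w ∈ I × Fin a}` (which, by (1), is the multiset of the
numbers `col_{(i,1)}(v)`, `i ∈ I`, each with multiplicity `a`). -/
theorem statement_12 {p : ℕ} (hp : p.Prime)
    {L : Type*} [NontriviallyNormedField L] [CompleteSpace L] [IsUltrametricDist L]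
    (hpL : ‖(p : L)‖ = (p : ℝ)⁻¹)
    {I : Type*} [Countable I] [Infinite I]
    (E : Subfield L) (a : ℕ) (ha : 0 < a)
    (ζ : Fin a → L) (hζ0 : ζ ⟨0, ha⟩ = 1) (hζint : ∀ j, ‖ζ j‖ ≤ 1)
    (hbasis : ∀ z : L, ∃! e : Fin a → L, (∀ j, e j ∈ E) ∧ z = ∑ j : Fin a, e j * ζ j)
    (hintbasis : ∀ e : Fin a → L, (∀ j, e j ∈ E) →
      ∀ j, ‖e j‖ ≤ ‖∑ k : Fin a, e k * ζ k‖)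
    (ν : L ≃+* L) (hν : ∀ e ∈ E, ν e = e)
    (b : I → L) (hb0 : ∀ i, b i ≠ 0) (hbc : cZero b)
    (v : (I → L) → I → L)
    (hadd : ∀ z ∈ sBall b, ∀ w ∈ sBall b, v (z + w) = v z + v w)
    (hmaps : ∀ z ∈ sBall b, v z ∈ sBall b)
    (hcont : ∃ C : ℝ, ∀ z ∈ sBall b, normB b (v z) ≤ C * normB b z)
    (hsemi : ∀ (c : L), ∀ z ∈ sBall b, v (fun i => ν c * z i) = fun i => c * v z i)
    (N : I × Fin a → I × Fin a → L) (hNE : ∀ w w', N w w' ∈ E)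
    (hN : ∀ (i' : I) (j' : Fin a) (i : I),
      v (fun k => if k = i' then ζ j' * b i' else 0) i
        = (∑ j : Fin a, N (i, j) (i', j') * ζ j) * b i)
    (htight : ∀ C : ℝ, {w : I × Fin a | colOf p N w < (C : EReal)}.Finite) :
    (∀ (i : I) (j : Fin a), colOf p N (i, j) = colOf p N (i, ⟨0, ha⟩)) ∧
    (∀ n : ℕ, Summable
      (fun S : {S : Finset (I × Fin a) // S.card = n} => fredholmTerm N S.1)) ∧
    ∀ (n : ℕ) (T : Finset (I × Fin a)), T.card = n →
      (∀ w ∈ T, ∀ w' ∉ T, colOf p N w ≤ colOf p N w') →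
      (∑ w ∈ T, colOf p N w) ≤ vpE p (detCoeff N n) :=
  statement_12_general hp E a ha ζ hζ0 hζint hbasis hintbasis ν hν b hb0 v hmaps hsemi N hNE hN
    htight

end FredholmStmt
end
end

section
/- Let f: A → V be a continuous L-linear map of Banach spaces with f(A₀) ⊆ V₀, and let f̄: Ā → V̄ be the induced map. If f̄ is surjective, then f(A₀) = V₀ (in particular f is surjective), and the image of ker(f) ∩ A₀ in Ā is exactly ker(f̄). -/
/-!
Successive approximation modulo `π`: lift `v` to `a₀` up to an error `π v₁` with `‖v₁‖ ≤ 1`,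
lift `v₁` to `a₁`, and so on; in the ultrametric complete space `A` the series `∑ πⁿ aₙ`
converges to an element of the unit ball mapping to `v`. Rescaling gives surjectivity, and
for `‖f a‖ ≤ ‖π‖` one corrects `a` by `π b`, where `b` lifts `π⁻¹ f a`.
-/

noncomputable section

namespace ModpStmt

open Filter Topology Finset

theorem sum_range_pow_smul_sub_smul_succ {R M : Type*} [CommRing R] [AddCommGroup M] [Module R M]
    (π : R) (v : ℕ → M) (n : ℕ) :
    ∑ i ∈ range n, π ^ i • (v i - π • v (i + 1)) = v 0 - π ^ n • v n := by
  have hterm : ∀ i, π ^ i • (v i - π • v (i + 1)) = π ^ i • v i - π ^ (i + 1) • v (i + 1) := by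
    intro i
    rw [smul_sub, smul_smul, pow_succ]
  simp only [hterm, sum_range_sub' (fun i => π ^ i • v i), pow_zero, one_smul]

section Series

variable {K : Type*} [NormedField K] {E : Type*} [NormedAddCommGroup E] [NormedSpace K E]

theorem tendsto_pow_smul_of_norm_le_one {π : K} (hπ : ‖π‖ < 1) {v : ℕ → E}
    (hv : ∀ n, ‖v n‖ ≤ 1) : Tendsto (fun n => π ^ n • v n) atTop (𝓝 0) := by
  rw [tendsto_zero_iff_norm_tendsto_zero]
  refine squeeze_zero (fun n => norm_nonneg _) (fun n => ?_)
    (tendsto_pow_atTop_nhds_zero_of_lt_one (norm_nonneg π) hπ)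
  rw [norm_smul, norm_pow]
  exact mul_le_of_le_one_right (by positivity) (hv n)

theorem tendsto_sum_range_pow_smul_sub_smul_succ {π : K} (hπ : ‖π‖ < 1) {v : ℕ → E}
    (hv : ∀ n, ‖v n‖ ≤ 1) :
    Tendsto (fun n => ∑ i ∈ range n, π ^ i • (v i - π • v (i + 1))) atTop (𝓝 (v 0)) := by
  simp only [sum_range_pow_smul_sub_smul_succ]
  simpa using (tendsto_pow_smul_of_norm_le_one hπ hv).const_sub (v 0)

theorem summable_pow_smul_of_norm_le_one [CompleteSpace E] {π : K} (hπ : ‖π‖ < 1)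
    {x : ℕ → E} (hx : ∀ n, ‖x n‖ ≤ 1) : Summable fun n => π ^ n • x n := by
  refine .of_norm_bounded (summable_geometric_of_lt_one (norm_nonneg π) hπ) fun n => ?_
  rw [norm_smul, norm_pow]
  exact mul_le_of_le_one_right (by positivity) (hx n)

theorem norm_tsum_pow_smul_le_one [IsUltrametricDist E] {π : K} (hπ : ‖π‖ < 1)
    {x : ℕ → E} (hx : ∀ n, ‖x n‖ ≤ 1) : ‖∑' n, π ^ n • x n‖ ≤ 1 := by
  refine IsUltrametricDist.norm_tsum_le_of_forall_le_of_nonneg zero_le_one fun n => ?_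
  rw [norm_smul, norm_pow]
  exact mul_le_one₀ (pow_le_one₀ (norm_nonneg π) hπ.le) (norm_nonneg _) (hx n)

end Series

section Lifting

variable {K : Type*} [NontriviallyNormedField K]
  {E F : Type*} [NormedAddCommGroup E] [NormedSpace K E] [NormedAddCommGroup F] [NormedSpace K F]

theorem exists_eq_of_forall_exists_norm_sub_le [CompleteSpace E] [IsUltrametricDist E]
    (f : E →L[K] F) {π : K} (hπ0 : 0 < ‖π‖) (hπ1 : ‖π‖ < 1)
    (happrox : ∀ v : F, ‖v‖ ≤ 1 → ∃ a : E, ‖a‖ ≤ 1 ∧ ‖f a - v‖ ≤ ‖π‖)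
    {v : F} (hv : ‖v‖ ≤ 1) : ∃ a : E, ‖a‖ ≤ 1 ∧ f a = v := by
  choose! lift hlift_norm hlift_sub using happrox
  have hπ : π ≠ 0 := norm_pos_iff.mp hπ0
  set w : ℕ → F := fun n => (fun u => π⁻¹ • (u - f (lift u)))^[n] v
  have hw_succ : ∀ n, w (n + 1) = π⁻¹ • (w n - f (lift (w n))) := fun n =>
    Function.iterate_succ_apply' _ n v
  have hw_norm : ∀ n, ‖w n‖ ≤ 1 := by
    intro n
    induction n with
    | zero => exact hv
    | succ n ih =>
      rw [hw_succ, norm_smul, norm_inv, inv_mul_le_one₀ hπ0, norm_sub_rev]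
      exact hlift_sub _ ih
  have hw_zero : w 0 = v := rfl
  have hf_lift : ∀ n, f (lift (w n)) = w n - π • w (n + 1) := fun n => by
    rw [hw_succ, smul_inv_smul₀ hπ, sub_sub_cancel]
  have hsum := (summable_pow_smul_of_norm_le_one hπ1 fun n => hlift_norm _ (hw_norm n)).hasSum
  refine ⟨_, norm_tsum_pow_smul_le_one hπ1 fun n => hlift_norm _ (hw_norm n), ?_⟩
  refine tendsto_nhds_unique ((f.continuous.tendsto _).comp hsum.tendsto_sum_nat) ?_
  simpa only [Function.comp_def, map_sum, map_smul, hf_lift, hw_zero] using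
    tendsto_sum_range_pow_smul_sub_smul_succ hπ1 hw_norm

theorem surjective_of_forall_norm_le_one_exists_eq {f : E →ₗ[K] F}
    (h : ∀ v : F, ‖v‖ ≤ 1 → ∃ a : E, f a = v) : Function.Surjective f := by
  intro v
  obtain ⟨c, hc0, hc⟩ := NormedField.exists_norm_lt K (inv_pos.mpr (by positivity : 0 < ‖v‖ + 1))
  have hcv : ‖c • v‖ ≤ 1 := by
    rw [norm_smul]
    calc ‖c‖ * ‖v‖ ≤ (‖v‖ + 1)⁻¹ * (‖v‖ + 1) := by gcongr; linarith
      _ = 1 := inv_mul_cancel₀ (by positivity)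
  obtain ⟨a, ha⟩ := h _ hcv
  exact ⟨c⁻¹ • a, by rw [map_smul, ha, inv_smul_smul₀ (norm_pos_iff.mp hc0)]⟩

theorem exists_mem_ker_norm_sub_le [IsUltrametricDist E] {f : E →ₗ[K] F} {π : K}
    (hπ0 : 0 < ‖π‖) (hπ1 : ‖π‖ < 1) (hlift : ∀ v : F, ‖v‖ ≤ 1 → ∃ a : E, ‖a‖ ≤ 1 ∧ f a = v)
    {a : E} (ha : ‖a‖ ≤ 1) (hfa : ‖f a‖ ≤ ‖π‖) :
    ∃ a' : E, f a' = 0 ∧ ‖a'‖ ≤ 1 ∧ ‖a - a'‖ ≤ ‖π‖ := by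
  have hπ : π ≠ 0 := norm_pos_iff.mp hπ0
  obtain ⟨b, hb, hfb⟩ := hlift (π⁻¹ • f a) (by
    rwa [norm_smul, norm_inv, inv_mul_le_one₀ hπ0])
  have hπb : ‖π • b‖ ≤ ‖π‖ := by
    rw [norm_smul]
    exact mul_le_of_le_one_right hπ0.le hb
  refine ⟨a - π • b, ?_, ?_, ?_⟩
  · rw [map_sub, map_smul, hfb, smul_inv_smul₀ hπ, sub_self]
  · rw [sub_eq_add_neg]
    refine (IsUltrametricDist.norm_add_le_max a _).trans (max_le ha ?_)
    rw [norm_neg]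
    exact hπb.trans hπ1.le
  · rwa [sub_sub_cancel]

end Lifting

theorem statement_13_general {L : Type*} [NontriviallyNormedField L]
    (π : L) (hπ0 : 0 < ‖π‖) (hπ1 : ‖π‖ < 1)
    {A V : Type*}
    [NormedAddCommGroup A] [NormedSpace L A] [CompleteSpace A] [IsUltrametricDist A]
    [NormedAddCommGroup V] [NormedSpace L V]
    (f : A →L[L] V)
    (hsurj : ∀ v : V, ‖v‖ ≤ 1 → ∃ a : A, ‖a‖ ≤ 1 ∧ ‖f a - v‖ ≤ ‖π‖) :
    (∀ v : V, ‖v‖ ≤ 1 → ∃ a : A, ‖a‖ ≤ 1 ∧ f a = v) ∧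
    Function.Surjective (f : A → V) ∧
    ((∀ a : A, ‖a‖ ≤ 1 → f a = 0 → ‖f a‖ ≤ ‖π‖) ∧
      ∀ a : A, ‖a‖ ≤ 1 → ‖f a‖ ≤ ‖π‖ →
        ∃ a' : A, f a' = 0 ∧ ‖a'‖ ≤ 1 ∧ ‖a - a'‖ ≤ ‖π‖) := by
  have hlift : ∀ v : V, ‖v‖ ≤ 1 → ∃ a : A, ‖a‖ ≤ 1 ∧ f a = v := fun v hv =>
    exists_eq_of_forall_exists_norm_sub_le f hπ0 hπ1 hsurj hv
  refine ⟨hlift, ?_, fun a _ h => by simp [h, hπ0.le], ?_⟩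
  · exact surjective_of_forall_norm_le_one_exists_eq (f := (f : A →ₗ[L] V)) fun v hv =>
      (hlift v hv).imp fun _ => And.right
  · exact fun a ha hfa => exists_mem_ker_norm_sub_le (f := (f : A →ₗ[L] V)) hπ0 hπ1 hlift ha hfa

/-- Let `f : A → V` be a continuous `L`-linear map of Banach spaces
over a finite extension `L` of `ℚ_p` (norms nonarchimedean, compatible with the norm of
`L`, and taking values in the norm group `|L| = ‖π‖^ℤ ∪ {0}` of `L`, where `π` is a
uniformizer), with `f(A₀) ⊆ V₀` (here `W₀ = {w : ‖w‖ ≤ 1}` and `W̄ = W₀/𝔪W₀`, so that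
`w ∈ 𝔪W₀ ↔ ‖w‖ ≤ ‖π‖`). If the induced map `f̄ : Ā → V̄` is surjective — i.e. every
`v ∈ V₀` is within `‖π‖` of some `f(a)`, `a ∈ A₀` — then `f(A₀) = V₀` (in particular
`f` is surjective), and the image of `ker f ∩ A₀` in `Ā` is exactly `ker f̄` — i.e.
every `a ∈ A₀` with `‖f a‖ ≤ ‖π‖` is within `‖π‖` of some `a' ∈ A₀` with `f a' = 0`
(the reverse inclusion being automatic). -/
theorem statement_13 {L : Type*} [NontriviallyNormedField L] [CompleteSpace L]
    [IsUltrametricDist L]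
    (π : L) (hπ0 : 0 < ‖π‖) (hπ1 : ‖π‖ < 1)
    (hdisc : ∀ z : L, z ≠ 0 → ∃ k : ℤ, ‖z‖ = ‖π‖ ^ k)
    {A V : Type*}
    [NormedAddCommGroup A] [NormedSpace L A] [CompleteSpace A] [IsUltrametricDist A]
    [NormedAddCommGroup V] [NormedSpace L V] [CompleteSpace V] [IsUltrametricDist V]
    (hAnorm : ∀ a : A, a ≠ 0 → ∃ k : ℤ, ‖a‖ = ‖π‖ ^ k)
    (hVnorm : ∀ v : V, v ≠ 0 → ∃ k : ℤ, ‖v‖ = ‖π‖ ^ k)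
    (f : A →L[L] V) (hf : ∀ a : A, ‖a‖ ≤ 1 → ‖f a‖ ≤ 1)
    (hsurj : ∀ v : V, ‖v‖ ≤ 1 → ∃ a : A, ‖a‖ ≤ 1 ∧ ‖f a - v‖ ≤ ‖π‖) :
    (∀ v : V, ‖v‖ ≤ 1 → ∃ a : A, ‖a‖ ≤ 1 ∧ f a = v) ∧
    Function.Surjective (f : A → V) ∧
    ((∀ a : A, ‖a‖ ≤ 1 → f a = 0 → ‖f a‖ ≤ ‖π‖) ∧
      ∀ a : A, ‖a‖ ≤ 1 → ‖f a‖ ≤ ‖π‖ →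
        ∃ a' : A, f a' = 0 ∧ ‖a'‖ ≤ 1 ∧ ‖a - a'‖ ≤ ‖π‖) :=
  statement_13_general π hπ0 hπ1 f hsurj
end ModpStmt
end
end
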